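/- arXiv:1912.04214 — 11 statements merged into one kernel-verified Lean document; each statement's English description precedes it below -/
import Mathlib

section
/- Let π : 2^ℕ × 2^ℕ → 2^ℕ be the projection onto the first coordinate. The set 𝒞 = {C ∈ K(2^ℕ × 2^ℕ) : π(C) = 2^ℕ} of compact subsets of the square of Cantor space projecting onto the whole Cantor space is a closed subset of the hyperspace K(2^ℕ × 2^ℕ) with the Vietoris topology; moreover 𝒞 is nonempty and has no isolated points, hence is homeomorphic to the Cantor set. -/
open TopologicalSpace

abbrev Cantor : Type := ℕ → Bool

noncomputable instance : MetricSpace Cantor :=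
  TopologicalSpace.metrizableSpaceMetric Cantor

/-- The family of compact subsets of `2^ℕ × 2^ℕ` projecting onto the whole
Cantor space. -/
def Cc : Set (NonemptyCompacts (Cantor × Cantor)) :=
  {C | Prod.fst '' (C : Set (Cantor × Cantor)) = Set.univ}

/-!
`𝒞` is closed because it is the intersection over `x` of the Vietoris-closed sets
`{C | C ∩ ({x} × 2^ℕ) ≠ ∅}`. It has no isolated points: for `(p, q) ∈ C` and a small box
`P × V` around it, replacing the part of `C` inside the box by a segment `P × {q'}` with
`q' ≠ q` gives another element of `𝒞` that is Hausdorff-close to `C`. The hyperspace of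
`2^ℕ × 2^ℕ` is compact, second countable and totally disconnected, hence so is `𝒞`, and
Brouwer's theorem applies.

For Brouwer's theorem fix clopen sets `U₀, U₁, …` separating points and split every piece
by the first `Uᵢ` that meets both the piece and its complement. Perfectness keeps all pieces
nonempty, so the address map `Z → 2^ℕ` is a continuous surjection (pieces are clopen, `Z` is
compact); it is injective because after `n` splits no `Uᵢ` with `i < n` splits a piece.
-/

open Set Filter Topology

instance Pi.instPerfectSpace {ι : Type*} {X : ι → Type*} [∀ i, TopologicalSpace (X i)]
    [Infinite ι] [∀ i, Nontrivial (X i)] : PerfectSpace (∀ i, X i) := by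
  classical
  refine perfectSpace_iff_forall_not_isolated.2 fun x => ?_
  choose y hy using fun i => exists_ne (x i)
  have : Tendsto (fun i => Function.update x i (y i)) cofinite (𝓝[≠] x) := by
    refine tendsto_nhdsWithin_iff.2 ⟨tendsto_pi_nhds.2 fun j => ?_, .of_forall fun i h => ?_⟩
    · refine tendsto_const_nhds.congr' ?_
      filter_upwards [(finite_singleton j).compl_mem_cofinite] with i hi
      exact (Function.update_of_ne (Ne.symm hi) _ _).symm
    · exact hy i (by simpa using congrFun h i)
  exact this.neBot

theorem Preperfect.perfectSpace {X : Type*} [TopologicalSpace X] {S : Set X}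
    (h : Preperfect S) : PerfectSpace S :=
  perfectSpace_iff_forall_not_isolated.2 fun x =>
    ⟨fun hx => (h x x.2).ne (nhds_ne_subtype_eq_bot_iff.1 hx)⟩

namespace Brouwer

variable {Z : Type*}

def Splits (s K : Set Z) : Prop := (K ∩ s).Nonempty ∧ (K \ s).Nonempty

lemma Splits.mono {s K L : Set Z} (h : Splits s K) (hKL : K ⊆ L) : Splits s L :=
  ⟨h.1.mono (inter_subset_inter_left _ hKL), h.2.mono (sdiff_subset_sdiff_left hKL)⟩

lemma exists_splits {U : ℕ → Set Z} (hsep : ∀ x y, x ≠ y → ∃ i, x ∈ U i ∧ y ∉ U i)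
    {K : Set Z} (hK : K.Nontrivial) : ∃ i, Splits (U i) K := by
  obtain ⟨x, hx, y, hy, hxy⟩ := hK
  obtain ⟨i, hxi, hyi⟩ := hsep x y hxy
  exact ⟨i, ⟨x, hx, hxi⟩, ⟨y, hy, hyi⟩⟩

variable (U : ℕ → Set Z)

open Classical in
noncomputable def splitIndex (K : Set Z) : ℕ :=
  if h : ∃ i, Splits (U i) K then Nat.find h else 0

variable {U} in
lemma splits_splitIndex {K : Set Z} (h : ∃ i, Splits (U i) K) :
    Splits (U (splitIndex U K)) K := by
  classical
  rw [splitIndex, dif_pos h]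
  exact Nat.find_spec h

variable {U} in
lemma splitIndex_le {K : Set Z} {i : ℕ} (h : Splits (U i) K) : splitIndex U K ≤ i := by
  classical
  rw [splitIndex, dif_pos ⟨i, h⟩]
  exact Nat.find_min' _ h

noncomputable def piece : List Bool → Set Z
  | [] => univ
  | b :: l => piece l ∩ (U (splitIndex U (piece l))).boolIndicator ⁻¹' {b}

noncomputable def code (z : Z) : ℕ → List Bool
  | 0 => []
  | n + 1 => (U (splitIndex U (piece U (code z n)))).boolIndicator z :: code z n

noncomputable def address (z : Z) (n : ℕ) : Bool :=
  (U (splitIndex U (piece U (code U z n)))).boolIndicator z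

lemma length_code (z : Z) (n : ℕ) : (code U z n).length = n := by
  induction n with
  | zero => rfl
  | succ n ih => simp [code, ih]

lemma res_address (z : Z) (n : ℕ) : PiNat.res (address U z) n = code U z n := by
  induction n with
  | zero => rfl
  | succ n ih => rw [PiNat.res_succ, ih]; rfl

lemma mem_piece_iff {z : Z} {l : List Bool} : z ∈ piece U l ↔ code U z l.length = l := by
  induction l with
  | nil => simp [piece, code]
  | cons b l ih =>
    simp only [piece, mem_inter_iff, mem_preimage, mem_singleton_iff, List.length_cons, code,
      List.cons.injEq, ih]
    constructor
    · rintro ⟨hl, rfl⟩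
      exact ⟨by rw [hl], hl⟩
    · rintro ⟨rfl, hl⟩
      exact ⟨hl, by rw [hl]⟩

lemma mem_piece_code (z : Z) (n : ℕ) : z ∈ piece U (code U z n) :=
  (mem_piece_iff U).2 (by rw [length_code])

lemma not_splits_piece {i : ℕ} {l : List Bool} (hi : i < l.length) :
    ¬ Splits (U i) (piece U l) := by
  induction l generalizing i with
  | nil => exact absurd hi (Nat.not_lt_zero i)
  | cons b l ih =>
    intro hs
    have hsl : Splits (U i) (piece U l) := hs.mono inter_subset_left
    rcases Nat.lt_succ_iff_lt_or_eq.1 hi with hi | rfl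
    · exact ih hi hsl
    -- `U i` is the first set splitting `piece U l`, and the child lies on one side of it.
    have hidx : splitIndex U (piece U l) = l.length :=
      (splitIndex_le hsl).antisymm <| not_lt.1 fun hlt => ih hlt (splits_splitIndex ⟨_, hsl⟩)
    obtain ⟨⟨x, ⟨-, hxb⟩, hxU⟩, ⟨y, ⟨-, hyb⟩, hyU⟩⟩ := hs
    rw [hidx, mem_preimage, mem_singleton_iff] at hxb hyb
    rw [(mem_iff_boolIndicator _ _).1 hxU] at hxb
    rw [(notMem_iff_boolIndicator _ _).1 hyU] at hyb
    exact absurd (hxb.trans hyb.symm) (by decide)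

lemma injective_address (hsep : ∀ x y, x ≠ y → ∃ i, x ∈ U i ∧ y ∉ U i) :
    Function.Injective (address U) := by
  intro z w hzw
  by_contra hne
  obtain ⟨i, hzi, hwi⟩ := hsep z w hne
  have hcode : code U z (i + 1) = code U w (i + 1) := by rw [← res_address, ← res_address, hzw]
  refine not_splits_piece U (i := i) (l := code U z (i + 1)) (by rw [length_code]; omega) ?_
  exact ⟨⟨z, mem_piece_code U z _, hzi⟩, ⟨w, hcode ▸ mem_piece_code U w _, hwi⟩⟩

variable [TopologicalSpace Z]

lemma isClopen_piece (hU : ∀ i, IsClopen (U i)) (l : List Bool) : IsClopen (piece U l) := by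
  induction l with
  | nil => exact isClopen_univ
  | cons b l ih =>
    exact ih.inter ((isClopen_discrete {b}).preimage
      ((continuous_boolIndicator_iff_isClopen _).2 (hU _)))

lemma piece_nonempty [PerfectSpace Z] [Nonempty Z] (hU : ∀ i, IsClopen (U i))
    (hsep : ∀ x y, x ≠ y → ∃ i, x ∈ U i ∧ y ∉ U i) (l : List Bool) : (piece U l).Nonempty := by
  induction l with
  | nil => exact univ_nonempty
  | cons b l ih =>
    obtain ⟨x, hx⟩ := ih
    obtain ⟨y, ⟨-, hy⟩, hyx⟩ := accPt_iff_nhds.1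
      ((isClopen_piece U hU l).isOpen.preperfect x hx) univ univ_mem
    have hsplit := splits_splitIndex (exists_splits hsep ⟨x, hx, y, hy, Ne.symm hyx⟩)
    cases b
    · simpa [piece, preimage_boolIndicator_false, ← sdiff_eq] using hsplit.2
    · simpa [piece, preimage_boolIndicator_true] using hsplit.1

lemma isLocallyConstant_code (hU : ∀ i, IsClopen (U i)) (n : ℕ) :
    IsLocallyConstant (code U · n) := by
  refine IsLocallyConstant.iff_isOpen_fiber.2 fun l => ?_
  by_cases hl : l.length = n
  · convert (isClopen_piece U hU l).isOpen using 1
    ext z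
    rw [mem_preimage, mem_singleton_iff, mem_piece_iff, hl]
  · convert isOpen_empty
    ext z
    simp only [mem_preimage, mem_singleton_iff, mem_empty_iff_false, iff_false]
    exact fun h => hl (h ▸ length_code U z n)

lemma continuous_address (hU : ∀ i, IsClopen (U i)) : Continuous (address U) :=
  continuous_pi fun n => ((isLocallyConstant_code U hU (n + 1)).comp List.headI).continuous

lemma surjective_address [CompactSpace Z] [PerfectSpace Z] [Nonempty Z]
    (hU : ∀ i, IsClopen (U i)) (hsep : ∀ x y, x ≠ y → ∃ i, x ∈ U i ∧ y ∉ U i) :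
    Function.Surjective (address U) := by
  intro x
  obtain ⟨z, hz⟩ := IsCompact.nonempty_iInter_of_sequence_nonempty_isCompact_isClosed
    (fun n => piece U (PiNat.res x n)) (fun n => inter_subset_left)
    (fun n => piece_nonempty U hU hsep _) (isClopen_piece U hU _).isClosed.isCompact
    (fun n => (isClopen_piece U hU _).isClosed)
  refine ⟨z, PiNat.res_injective (funext fun n => ?_)⟩
  have := (mem_piece_iff U).1 (mem_iInter.1 hz n)
  rwa [PiNat.res_length, ← res_address] at this

end Brouwer

open Brouwer in
theorem nonempty_homeomorph_nat_bool_of_separating {Z : Type*} [TopologicalSpace Z]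
    [CompactSpace Z] [T2Space Z] [PerfectSpace Z] [Nonempty Z] {U : ℕ → Set Z}
    (hU : ∀ i, IsClopen (U i)) (hsep : ∀ x y, x ≠ y → ∃ i, x ∈ U i ∧ y ∉ U i) :
    Nonempty (Z ≃ₜ (ℕ → Bool)) :=
  ⟨(continuous_address U hU).homeoOfEquivCompactToT2
    (f := .ofBijective _ ⟨injective_address U hsep, surjective_address U hU hsep⟩)⟩

theorem exists_seq_isClopen_separating (Z : Type*) [TopologicalSpace Z] [CompactSpace Z]
    [T2Space Z] [TotallyDisconnectedSpace Z] [SecondCountableTopology Z] :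
    ∃ U : ℕ → Set Z, (∀ i, IsClopen (U i)) ∧ ∀ x y, x ≠ y → ∃ i, x ∈ U i ∧ y ∉ U i := by
  obtain ⟨s, hs, hsc, hb⟩ := isTopologicalBasis_isClopen.exists_countable (α := Z)
  obtain ⟨U, hU⟩ := (hsc.insert ∅).exists_eq_range (insert_nonempty _ _)
  refine ⟨U, fun i => ?_, fun x y hxy => ?_⟩
  · rcases (hU ▸ mem_range_self i : U i ∈ insert ∅ s) with h | h
    · exact h ▸ isClopen_empty
    · exact hs h
  · obtain ⟨V, hV, hxV, hVy⟩ := hb.exists_subset_of_mem_open hxy isOpen_compl_singleton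
    obtain ⟨i, rfl⟩ : V ∈ range U := hU ▸ mem_insert_of_mem _ hV
    exact ⟨i, hxV, fun h => hVy h rfl⟩

theorem nonempty_homeomorph_nat_bool (Z : Type*) [TopologicalSpace Z] [CompactSpace Z]
    [T2Space Z] [TotallyDisconnectedSpace Z] [SecondCountableTopology Z] [PerfectSpace Z]
    [Nonempty Z] : Nonempty (Z ≃ₜ (ℕ → Bool)) :=
  let ⟨_, hU, hsep⟩ := exists_seq_isClopen_separating Z
  nonempty_homeomorph_nat_bool_of_separating hU hsep

namespace TopologicalSpace.NonemptyCompacts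

instance {X : Type*} [TopologicalSpace X] [T2Space X] [CompactSpace X]
    [TotallyDisconnectedSpace X] : TotallySeparatedSpace (NonemptyCompacts X) := by
  refine totallySeparatedSpace_iff_exists_isClopen.2 fun C D hCD => ?_
  wlog hCD' : ¬ (C : Set X) ⊆ D generalizing C D
  · obtain ⟨V, hV, hDV, hCV⟩ := this D C hCD.symm fun hDC =>
      hCD (NonemptyCompacts.ext ((not_not.1 hCD').antisymm hDC))
    exact ⟨Vᶜ, hV.compl, hCV, by simpa using hDV⟩
  obtain ⟨z, hzC, hzD⟩ := not_subset.1 hCD'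
  obtain ⟨W, hW, hzW, hWD⟩ :=
    compact_exists_isClopen_in_isOpen D.isCompact.isClosed.isOpen_compl hzD
  exact ⟨{E | ((E : Set X) ∩ W).Nonempty},
    ⟨isClosed_inter_nonempty_of_isClosed hW.1, isOpen_inter_nonempty_of_isOpen hW.2⟩,
    ⟨z, hzC, hzW⟩, fun ⟨y, hyD, hyW⟩ => hWD hyW hyD⟩

end TopologicalSpace.NonemptyCompacts

theorem isClosed_setOf_image_fst_eq_univ {X Y : Type*} [TopologicalSpace X] [T1Space X]
    [TopologicalSpace Y] :
    IsClosed {C : NonemptyCompacts (X × Y) | Prod.fst '' (C : Set (X × Y)) = univ} := by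
  have : {C : NonemptyCompacts (X × Y) | Prod.fst '' (C : Set (X × Y)) = univ} =
      ⋂ x, {C : NonemptyCompacts (X × Y) |
        ((C : Set (X × Y)) ∩ Prod.fst ⁻¹' {x}).Nonempty} := by
    ext C
    simp [eq_univ_iff_forall, Set.Nonempty]
  rw [this]
  exact isClosed_iInter fun x => NonemptyCompacts.isClosed_inter_nonempty_of_isClosed
    (isClosed_singleton.preimage continuous_fst)

section

variable {X Y : Type*} [EMetricSpace X] [EMetricSpace Y]

theorem exists_ne_edist_le_of_image_fst_eq_univ [LocallyCompactSpace X] [PerfectSpace Y]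
    {C : NonemptyCompacts (X × Y)} (hC : Prod.fst '' (C : Set (X × Y)) = univ)
    {ε : ENNReal} (hε : 0 < ε) :
    ∃ D : NonemptyCompacts (X × Y), Prod.fst '' (D : Set (X × Y)) = univ ∧ D ≠ C ∧
      edist D C ≤ ε := by
  obtain ⟨⟨p, q⟩, hpq⟩ := C.nonempty
  have hcenter : (p, q) ∈ Metric.eball (p, q) (ε / 2) :=
    Metric.mem_eball_self (ENNReal.half_pos hε.ne')
  have hball : ∀ a ∈ Metric.eball (p, q) (ε / 2), ∀ b ∈ Metric.eball (p, q) (ε / 2),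
      edist a b ≤ ε := fun a ha b hb =>
    calc edist a b ≤ edist a (p, q) + edist b (p, q) := edist_triangle_right _ _ _
      _ ≤ ε / 2 + ε / 2 := add_le_add ha.le hb.le
      _ = ε := ENNReal.add_halves ε
  obtain ⟨u, v, hu, hv, hpu, hqv, huv⟩ := isOpen_prod_iff.1 Metric.isOpen_eball p q hcenter
  obtain ⟨P, hP, hpP, hPu⟩ := exists_compact_subset hu hpu
  obtain ⟨q', ⟨hq'v, -⟩, hq'q⟩ :=
    accPt_iff_nhds.1 (PerfectSpace.univ_preperfect q (mem_univ q)) v (hv.mem_nhds hqv)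
  let E : Set (X × Y) := ((C : Set (X × Y)) \ (interior P ×ˢ v)) ∪ P ×ˢ {q'}
  have hbox : P ×ˢ v ⊆ Metric.eball (p, q) (ε / 2) := (prod_mono hPu subset_rfl).trans huv
  have hseg : ∀ x ∈ P, (x, q') ∈ E := fun x hx => Or.inr ⟨hx, rfl⟩
  have hE : IsCompact E :=
    (C.isCompact.diff (isOpen_interior.prod hv)).union (hP.prod isCompact_singleton)
  refine ⟨⟨⟨E, hE⟩, ⟨_, hseg p (interior_subset hpP)⟩⟩, ?_, ?_, ?_⟩
  · refine eq_univ_of_forall fun x => ?_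
    by_cases hx : x ∈ interior P
    · exact ⟨_, hseg x (interior_subset hx), rfl⟩
    · obtain ⟨c, hc, rfl⟩ := hC ▸ mem_univ x
      exact ⟨c, Or.inl ⟨hc, fun h => hx h.1⟩, rfl⟩
  · intro h
    have hEC : E = C := congrArg SetLike.coe h
    rcases hEC ▸ hpq with ⟨-, h⟩ | ⟨-, h⟩
    · exact h ⟨hpP, hqv⟩
    · exact hq'q.symm h
  · refine Metric.hausdorffEDist_le_of_mem_edist (fun e he => ?_) (fun c hc => ?_)
    · rcases he with ⟨he, -⟩ | ⟨heP, rfl⟩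
      · exact ⟨e, he, by simp⟩
      · exact ⟨(p, q), hpq, hball _ (hbox ⟨heP, hq'v⟩) _ hcenter⟩
    · by_cases hcb : c ∈ interior P ×ˢ v
      · exact ⟨_, hseg c.1 (interior_subset hcb.1),
          hball _ (hbox ⟨interior_subset hcb.1, hcb.2⟩) _ (hbox ⟨interior_subset hcb.1, hq'v⟩)⟩
      · exact ⟨c, Or.inl ⟨hc, hcb⟩, by simp⟩

theorem preperfect_setOf_image_fst_eq_univ [LocallyCompactSpace X] [PerfectSpace Y] :
    Preperfect {C : NonemptyCompacts (X × Y) | Prod.fst '' (C : Set (X × Y)) = univ} := by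
  intro C hC
  rw [accPt_principal_iff_clusterPt, ← mem_closure_iff_clusterPt,
    mem_closure_iff_nhds_basis Metric.nhds_basis_closedEBall]
  intro ε hε
  obtain ⟨D, hD, hDC, hDC'⟩ := exists_ne_edist_le_of_image_fst_eq_univ hC hε
  exact ⟨D, ⟨hD, hDC⟩, hDC'⟩

end

/-- `𝒞 = {C ∈ K(2^ℕ × 2^ℕ) : π(C) = 2^ℕ}` is a closed subset of the
hyperspace, nonempty, without isolated points, hence homeomorphic to the
Cantor set. -/
theorem stmt3 :
    IsClosed Cc ∧ Cc.Nonempty ∧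
    (∀ C ∈ Cc, ClusterPt C (Filter.principal (Cc \ {C}))) ∧
    Nonempty (↥Cc ≃ₜ Cantor) := by
  have hclosed : IsClosed Cc := isClosed_setOf_image_fst_eq_univ
  have hne : Cc.Nonempty := ⟨⊤, by simp [Cc]⟩
  have hperf : Preperfect Cc := preperfect_setOf_image_fst_eq_univ
  have := isCompact_iff_compactSpace.1 hclosed.isCompact
  have := hne.to_subtype
  have := hperf.perfectSpace
  exact ⟨hclosed, hne, fun C hC => accPt_principal_iff_clusterPt.1 (hperf C hC),
    nonempty_homeomorph_nat_bool Cc⟩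
end

section
/- Let π : 2^ℕ × 2^ℕ → 2^ℕ be the first-coordinate projection and let σ : 2^ℕ → 2^ℕ × 2^ℕ be defined by σ(t) = min(h(t) ∩ π⁻¹({t})), where h : 2^ℕ → 𝒞 is a homeomorphism onto 𝒞 = {C compact : π(C) = 2^ℕ} and the minimum is taken with respect to the lexicographic order on 2^ℕ × 2^ℕ. Then σ is a function of Baire class 1 and π(σ(t)) = t for all t. -/
/-!
Since `σ t` lies over `t`, write `σ t = (t, g t)`: then `g t` is the lexicographic minimum of the
slice `S t = {y | (t, y) ∈ h t}`. If `g t` agrees with `x` on the first `n` digits, its `n`-th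
digit is `false` exactly when `S t` meets the cylinder of `x` with `n`-th digit set to `false`. As
`h` is continuous, the set of `t` whose slice meets a fixed closed set is closed (membership in a
compact set is a closed relation for the Vietoris topology, and projecting along the compact
factor is a closed map). By induction on `n`, the preimage under `g` of the complement of every
cylinder is a finite union of closed and open sets, hence `Gδ`; by second countability the
preimage under `σ` of every closed set is `Gδ`, i.e. the preimage of every open set is `Fσ`.
-/

open TopologicalSpace

/-- The lexicographic order on `2^ℕ` (with `false < true`). -/
def cantorLe (x y : Cantor) : Prop :=
  x = y ∨ ∃ n, (∀ m, m < n → x m = y m) ∧ x n < y n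

/-- A function is of Baire class 1 iff preimages of open sets are `Fσ`. -/
def IsBaireClassOne {A B : Type*} [TopologicalSpace A] [TopologicalSpace B]
    (f : A → B) : Prop :=
  ∀ U : Set B, IsOpen U →
    ∃ F : ℕ → Set A, (∀ n, IsClosed (F n)) ∧ f ⁻¹' U = ⋃ n, F n

open PiNat Function

theorem TopologicalSpace.NonemptyCompacts.isClosed_setOf_mem {α : Type*} [TopologicalSpace α]
    [T2Space α] : IsClosed {p : α × NonemptyCompacts α | p.1 ∈ p.2} := by
  refine isOpen_compl_iff.1 (isOpen_iff_forall_mem_open.2 fun ⟨x, K⟩ hx => ?_)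
  obtain ⟨V, U, hV, hU, hKV, hxU, hVU⟩ := K.isCompact.separation_of_notMem hx
  exact ⟨U ×ˢ {L : NonemptyCompacts α | ↑L ⊆ V},
    fun p ⟨hpU, hpV⟩ hp => hVU.ne_of_mem (hpV hp) hpU rfl,
    hU.prod (isOpen_subsets_of_isOpen hV), hxU, hKV⟩

theorem isClosed_setOf_slice_inter_nonempty {X Y : Type*} [TopologicalSpace X]
    [TopologicalSpace Y] [T2Space X] [T2Space Y] [CompactSpace Y]
    {F : X → NonemptyCompacts (X × Y)} (hF : Continuous F) {K : Set Y} (hK : IsClosed K) :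
    IsClosed {t | (Prod.mk t ⁻¹' (F t : Set (X × Y)) ∩ K).Nonempty} := by
  have hgraph : IsClosed {q : X × Y | q ∈ F q.1} :=
    NonemptyCompacts.isClosed_setOf_mem.preimage (continuous_id.prodMk (hF.comp continuous_fst))
  convert isClosedMap_fst_of_compactSpace _ (hgraph.inter (isClosed_univ.prod hK)) using 1
  ext t
  simp [Set.Nonempty]

section Cylinders

variable {E : ℕ → Type*}

theorem PiNat.mem_cylinder_update_succ {x y : ∀ n, E n} {n : ℕ} {a : E n} :
    y ∈ cylinder (update x n a) (n + 1) ↔ y ∈ cylinder x n ∧ y n = a := by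
  simp only [mem_cylinder_iff, Nat.lt_succ_iff_lt_or_eq, or_imp, forall_and, forall_eq,
    update_self]
  refine and_congr_left' (forall₂_congr fun i hi => ?_)
  rw [update_of_ne hi.ne]

theorem PiNat.mem_cylinder_succ {x y : ∀ n, E n} {n : ℕ} :
    y ∈ cylinder x (n + 1) ↔ y ∈ cylinder x n ∧ y n = x n := by
  rw [← mem_cylinder_update_succ, update_eq_self]

theorem PiNat.isClosed_cylinder [∀ n, TopologicalSpace (E n)] [∀ n, T1Space (E n)]
    (x : ∀ n, E n) (n : ℕ) : IsClosed (cylinder x n) := by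
  rw [cylinder_eq_pi]
  exact isClosed_set_pi fun i _ => isClosed_singleton

end Cylinders

theorem not_cantorLe_of_agree_below {x y : Cantor} {k : ℕ} (hxy : ∀ m < k, x m = y m)
    (hx : x k = true) (hy : y k = false) : ¬ cantorLe x y := by
  rintro (rfl | ⟨n, hn, hlt⟩)
  · simp_all
  · rcases lt_trichotomy n k with hnk | rfl | hnk
    · simp_all
    · simp_all [Bool.lt_iff]
    · simp_all [hn k hnk]

theorem lexMin_apply_eq_false_iff {S : Set Cantor} {m : Cantor} (hm : m ∈ S)
    (hmin : ∀ y ∈ S, cantorLe m y) {x : Cantor} {n : ℕ} (hmx : m ∈ cylinder x n) :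
    m n = false ↔ (S ∩ cylinder (update x n false) (n + 1)).Nonempty := by
  refine ⟨fun hmn => ⟨m, hm, mem_cylinder_update_succ.2 ⟨hmx, hmn⟩⟩, ?_⟩
  rintro ⟨y, hyS, hy⟩
  rw [mem_cylinder_update_succ] at hy
  by_contra hmn
  refine not_cantorLe_of_agree_below (fun i hi => ?_) (by simpa using hmn) hy.2 (hmin y hyS)
  rw [mem_cylinder_iff.1 hmx i hi, mem_cylinder_iff.1 hy.1 i hi]

theorem isGδ_preimage_compl_cylinder_of_lexMin {X : Type*} [TopologicalSpace X]
    [PerfectlyNormalSpace X] {S : X → Set Cantor} {g : X → Cantor} (hg : ∀ t, g t ∈ S t)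
    (hgmin : ∀ t, ∀ y ∈ S t, cantorLe (g t) y)
    (hS : ∀ K, IsClosed K → IsClosed {t | (S t ∩ K).Nonempty}) (x : Cantor) (n : ℕ) :
    IsGδ (g ⁻¹' (cylinder x n)ᶜ) := by
  induction n with
  | zero => simp only [cylinder_zero, Set.compl_univ, Set.preimage_empty, IsGδ.empty]
  | succ n ih =>
    set B := {t | (S t ∩ cylinder (update x n false) (n + 1)).Nonempty}
    have hB : IsClosed B := hS _ (isClosed_cylinder _ _)
    have hsucc :
        g ⁻¹' (cylinder x (n + 1))ᶜ = g ⁻¹' (cylinder x n)ᶜ ∪ if x n then B else Bᶜ := by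
      ext t
      by_cases ht : g t ∈ cylinder x n
      · have hdigit := lexMin_apply_eq_false_iff (hg t) (hgmin t) ht
        simp only [Set.mem_preimage, Set.mem_compl_iff, mem_cylinder_succ, ht]
        cases hx : x n <;> cases hgt : g t n <;> simp_all [B]
      · simp only [Set.mem_preimage, Set.mem_compl_iff, mem_cylinder_succ, ht, false_and,
          not_false_eq_true, Set.mem_union, true_or]
    rw [hsucc]
    refine ih.union ?_
    split_ifs
    exacts [hB.isGδ, hB.isOpen_compl.isGδ]

section GδPreimages

variable {X Y : Type*} [TopologicalSpace X] [TopologicalSpace Y]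

theorem isGδ_preimage_of_isTopologicalBasis [SecondCountableTopology Y] {B : Set (Set Y)}
    (hB : IsTopologicalBasis B) {f : X → Y} (hf : ∀ s ∈ B, IsGδ (f ⁻¹' sᶜ)) {C : Set Y}
    (hC : IsClosed C) : IsGδ (f ⁻¹' C) := by
  obtain ⟨T, hTc, hTB, hT⟩ := isOpen_sUnion_countable {s ∈ B | s ⊆ Cᶜ}
    fun s hs => hB.isOpen hs.1
  rw [← hB.open_eq_sUnion' hC.isOpen_compl] at hT
  have hfC : f ⁻¹' C = ⋂ s ∈ T, f ⁻¹' sᶜ := by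
    rw [← Set.preimage_iInter₂, ← Set.compl_iUnion₂, ← Set.sUnion_eq_biUnion, hT,
      compl_compl]
  rw [hfC]
  exact .biInter hTc fun s hs => hf s (hTB hs).1

theorem isGδ_preimage_prodMk [PerfectlyNormalSpace X] [SecondCountableTopology X]
    [SecondCountableTopology Y] {g : X → Y} (hg : ∀ C, IsClosed C → IsGδ (g ⁻¹' C))
    {C : Set (X × Y)} (hC : IsClosed C) : IsGδ ((fun t => (t, g t)) ⁻¹' C) := by
  refine isGδ_preimage_of_isTopologicalBasis
    ((isBasis_countableBasis X).prod (isBasis_countableBasis Y)) ?_ hC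
  rintro _ ⟨s, hs, u, hu, rfl⟩
  rw [Set.preimage_compl, Set.mk_preimage_prod, Set.preimage_id', Set.compl_inter,
    ← Set.preimage_compl]
  exact (isOpen_of_mem_countableBasis hs).isClosed_compl.isGδ.union
    (hg _ (isOpen_of_mem_countableBasis hu).isClosed_compl)

theorem isBaireClassOne_of_isGδ_preimage {f : X → Y}
    (hf : ∀ C, IsClosed C → IsGδ (f ⁻¹' C)) : IsBaireClassOne f := by
  intro U hU
  obtain ⟨G, hGo, hG⟩ := isGδ_iff_eq_iInter_nat.1 (hf _ hU.isClosed_compl)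
  refine ⟨fun n => (G n)ᶜ, fun n => (hGo n).isClosed_compl, ?_⟩
  rw [← Set.compl_iInter, ← hG, Set.preimage_compl, compl_compl]

end GδPreimages

/-- If `h : 2^ℕ → 𝒞` is a homeomorphism and `σ(t)` is the lexicographic
minimum of `h(t) ∩ π⁻¹({t})`, then `σ` is of Baire class 1 and
`π(σ(t)) = t` for all `t`. -/
theorem stmt4 (h : Cantor ≃ₜ ↥Cc) (σ : Cantor → Cantor × Cantor)
    (hmem : ∀ t : Cantor,
      σ t ∈ ((h t).1 : Set (Cantor × Cantor)) ∩ Prod.fst ⁻¹' {t})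
    (hmin : ∀ t : Cantor, ∀ x ∈ ((h t).1 : Set (Cantor × Cantor)) ∩ Prod.fst ⁻¹' {t},
      cantorLe (σ t).2 x.2) :
    IsBaireClassOne σ ∧ ∀ t, (σ t).1 = t := by
  have hfst : ∀ t, (σ t).1 = t := fun t => (hmem t).2
  refine ⟨?_, hfst⟩
  have hσ (t) : σ t = (t, (σ t).2) := Prod.ext (hfst t) rfl
  set S : Cantor → Set Cantor := fun t => Prod.mk t ⁻¹' ((h t).1 : Set (Cantor × Cantor))
  have hS (K) (hK : IsClosed K) : IsClosed {t | (S t ∩ K).Nonempty} :=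
    isClosed_setOf_slice_inter_nonempty (continuous_subtype_val.comp h.continuous) hK
  have hcyl (x : Cantor) (n : ℕ) : IsGδ ((fun t => (σ t).2) ⁻¹' (cylinder x n)ᶜ) :=
    isGδ_preimage_compl_cylinder_of_lexMin (S := S)
      (fun t => show (t, _) ∈ _ from hσ t ▸ (hmem t).1)
      (fun t y hy => hmin t (t, y) ⟨hy, rfl⟩) hS x n
  have hsnd (C) (hC : IsClosed C) : IsGδ ((fun t => (σ t).2) ⁻¹' C) :=
    isGδ_preimage_of_isTopologicalBasis (isTopologicalBasis_cylinders _)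
      (by rintro _ ⟨x, n, rfl⟩; exact hcyl x n) hC
  rw [funext hσ]
  exact isBaireClassOne_of_isGδ_preimage fun C hC => isGδ_preimage_prodMk hsnd hC
end

section
/- With 𝒞 = {C ∈ K(2^ℕ × 2^ℕ) : π(C) = 2^ℕ}, h : 2^ℕ → 𝒞 a homeomorphism, σ(t) = min(h(t) ∩ π⁻¹({t})) (lexicographic minimum), M = σ(2^ℕ), and T(C) = {t ∈ 2^ℕ : h(t) ⊆ C} for C ∈ 𝒞: (a) T(C) is compact; (b) T(C) ⊆ π(M ∩ C); and (c) if C' ⊆ C both belong to 𝒞, then T(C') ⊆ T(C). -/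
open TopologicalSpace

theorem Continuous.isCompact_setOf_coe_subset {X α : Type*} [TopologicalSpace X] [CompactSpace X]
    [TopologicalSpace α] {f : X → NonemptyCompacts α} (hf : Continuous f) {F : Set α}
    (hF : IsClosed F) : IsCompact {x | (f x : Set α) ⊆ F} :=
  ((NonemptyCompacts.isClosed_subsets_of_isClosed hF).preimage hf).isCompact

theorem stmt6_general (h : Cantor ≃ₜ ↥Cc) (σ : Cantor → Cantor × Cantor)
    (hmem : ∀ t : Cantor,
      σ t ∈ ((h t).1 : Set (Cantor × Cantor)) ∩ Prod.fst ⁻¹' {t})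
    (M : Set (Cantor × Cantor)) (hM : M = Set.range σ)
    (T : ↥Cc → Set Cantor)
    (hT : ∀ C : ↥Cc, T C = {t | ((h t).1 : Set (Cantor × Cantor)) ⊆ (C.1 : Set (Cantor × Cantor))}) :
    (∀ C : ↥Cc, IsCompact (T C)) ∧
    (∀ C : ↥Cc, T C ⊆ Prod.fst '' (M ∩ (C.1 : Set (Cantor × Cantor)))) ∧
    (∀ C C' : ↥Cc, (C'.1 : Set (Cantor × Cantor)) ⊆ (C.1 : Set (Cantor × Cantor)) →
      T C' ⊆ T C) := by
  subst hM
  refine ⟨fun C => ?_, fun C t ht => ?_, fun C C' hC'C t ht => ?_⟩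
  · rw [hT]
    exact (continuous_subtype_val.comp h.continuous).isCompact_setOf_coe_subset
      C.1.isCompact.isClosed
  · rw [hT] at ht
    exact ⟨σ t, ⟨Set.mem_range_self t, ht (hmem t).1⟩, (hmem t).2⟩
  · rw [hT] at ht ⊢
    exact ht.trans hC'C

/-- With `h : 2^ℕ → 𝒞` a homeomorphism, `σ(t) = min(h(t) ∩ π⁻¹({t}))`
(lexicographic minimum), `M = σ(2^ℕ)` and `T(C) = {t : h(t) ⊆ C}`:
(a) `T(C)` is compact; (b) `T(C) ⊆ π(M ∩ C)`; (c) `T` is monotone on `𝒞`. -/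
theorem stmt6 (h : Cantor ≃ₜ ↥Cc) (σ : Cantor → Cantor × Cantor)
    (hmem : ∀ t : Cantor,
      σ t ∈ ((h t).1 : Set (Cantor × Cantor)) ∩ Prod.fst ⁻¹' {t})
    (hmin : ∀ t : Cantor, ∀ x ∈ ((h t).1 : Set (Cantor × Cantor)) ∩ Prod.fst ⁻¹' {t},
      cantorLe (σ t).2 x.2)
    (M : Set (Cantor × Cantor)) (hM : M = Set.range σ)
    (T : ↥Cc → Set Cantor)
    (hT : ∀ C : ↥Cc, T C = {t | ((h t).1 : Set (Cantor × Cantor)) ⊆ (C.1 : Set (Cantor × Cantor))}) :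
    (∀ C : ↥Cc, IsCompact (T C)) ∧
    (∀ C : ↥Cc, T C ⊆ Prod.fst '' (M ∩ (C.1 : Set (Cantor × Cantor)))) ∧
    (∀ C C' : ↥Cc, (C'.1 : Set (Cantor × Cantor)) ⊆ (C.1 : Set (Cantor × Cantor)) →
      T C' ⊆ T C) :=
  stmt6_general h σ hmem M hM T hT
end

section
/- Let 𝒞 = {C compact in 2^ℕ × 2^ℕ : π(C) = 2^ℕ} and let h : 2^ℕ → 𝒞 be a fixed homeomorphism. Then for every nonempty open set V in 2^ℕ there exists C ∈ 𝒞 such that C is a finite union of clopen rectangles in 2^ℕ × 2^ℕ and every F ∈ 𝒞 contained in C satisfies h⁻¹(F) ∈ V, i.e. {t : h(t) ⊆ C} ⊆ V. -/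
open TopologicalSpace

/-- Length-`N` cylinder. -/
def cylC (N : ℕ) (s : Fin N → Bool) : Set Cantor := {x | ∀ i : Fin N, x i = s i}

lemma isClopen_cylC (N : ℕ) (s : Fin N → Bool) : IsClopen (cylC N s) := by
  have he : cylC N s = ⋂ i : Fin N, (fun x : Cantor => x i) ⁻¹' {s i} := by
    ext x; simp [cylC]
  rw [he]
  refine ⟨isClosed_iInter fun i => ?_, isOpen_iInter_of_finite fun i => ?_⟩
  · exact (isClosed_discrete _).preimage (continuous_apply (i : ℕ))
  · exact (isOpen_discrete _).preimage (continuous_apply (i : ℕ))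

/-- "double" cylinder: first `N` coordinates given by `s`, next `N` by `v`. -/
def dcylC (N : ℕ) (s v : Fin N → Bool) : Set Cantor :=
  {x | (∀ i : Fin N, x i = s i) ∧ ∀ i : Fin N, x (N + i) = v i}

lemma isClopen_dcylC (N : ℕ) (s v : Fin N → Bool) : IsClopen (dcylC N s v) := by
  have he : dcylC N s v = (⋂ i : Fin N, (fun x : Cantor => x i) ⁻¹' {s i}) ∩
      ⋂ i : Fin N, (fun x : Cantor => x (N + i)) ⁻¹' {v i} := by
    ext x; simp [dcylC, forall_and]
  rw [he]
  refine IsClopen.inter ⟨isClosed_iInter fun i => ?_, isOpen_iInter_of_finite fun i => ?_⟩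
    ⟨isClosed_iInter fun i => ?_, isOpen_iInter_of_finite fun i => ?_⟩
  · exact (isClosed_discrete _).preimage (continuous_apply (i : ℕ))
  · exact (isOpen_discrete _).preimage (continuous_apply (i : ℕ))
  · exact (isClosed_discrete _).preimage (continuous_apply (N + (i : ℕ)))
  · exact (isOpen_discrete _).preimage (continuous_apply (N + (i : ℕ)))

/-- canonical extension of a finite string to an element of Cantor space -/
def extC (N : ℕ) (s : Fin N → Bool) : Cantor :=
  fun i => if h : i < N then s ⟨i, h⟩ else false

lemma extC_mem (N : ℕ) (s : Fin N → Bool) : extC N s ∈ cylC N s := by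
  intro i
  simp [extC, i.isLt]

/-- Points that agree on the first `N` coordinates are close. -/
lemma key_mod (ε : ℝ) (hε : 0 < ε) :
    ∃ N : ℕ, ∀ x y : Cantor, (∀ i < N, x i = y i) → dist x y < ε := by
  set K : Set (Cantor × Cantor) := {p | ε ≤ dist p.1 p.2} with hK
  have hKc : IsCompact K := by
    have : IsClosed K := isClosed_le continuous_const (by fun_prop)
    exact this.isCompact
  have hcover : K ⊆ ⋃ n : ℕ, {p : Cantor × Cantor | p.1 n ≠ p.2 n} := by
    intro p hp
    by_contra hc
    simp only [Set.mem_iUnion, Set.mem_setOf_eq, not_exists, not_not] at hc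
    have : p.1 = p.2 := funext hc
    have : dist p.1 p.2 = 0 := by rw [this, dist_self]
    have := hp
    rw [hK] at this
    simp only [Set.mem_setOf_eq] at this
    linarith
  have hopen : ∀ n : ℕ, IsOpen {p : Cantor × Cantor | p.1 n ≠ p.2 n} := by
    intro n
    have : {p : Cantor × Cantor | p.1 n ≠ p.2 n} =
        (fun p : Cantor × Cantor => (p.1 n, p.2 n)) ⁻¹' {q : Bool × Bool | q.1 ≠ q.2} := rfl
    rw [this]
    exact (isOpen_discrete _).preimage (by fun_prop)
  obtain ⟨T, hT⟩ := hKc.elim_finite_subcover _ hopen hcover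
  classical
  refine ⟨(T.sup id) + 1, fun x y hxy => ?_⟩
  by_contra hc
  push_neg at hc
  have hmem : (x, y) ∈ K := hc
  obtain ⟨n, hn, hne⟩ := Set.mem_iUnion₂.mp (hT hmem)
  exact hne (hxy n (Nat.lt_succ_of_le (Finset.le_sup (f := id) hn)))

/-- For every nonempty open `V ⊆ 2^ℕ` there is `C ∈ 𝒞` which is a finite
union of clopen rectangles and such that every `F ∈ 𝒞` contained in `C`
satisfies `h⁻¹(F) ∈ V`, where `h : 2^ℕ → 𝒞` is a fixed homeomorphism. -/
theorem stmt7 (h : Cantor ≃ₜ ↥Cc)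
    (V : Set Cantor) (hV : IsOpen V) (hne : V.Nonempty) :
    ∃ C : NonemptyCompacts (Cantor × Cantor), C ∈ Cc ∧
      (∃ (n : ℕ) (A B : Fin n → Set Cantor),
        (∀ i, IsClopen (A i) ∧ IsClopen (B i)) ∧
        (C : Set (Cantor × Cantor)) = ⋃ i, A i ×ˢ B i) ∧
      (∀ F : NonemptyCompacts (Cantor × Cantor), (hF : F ∈ Cc) →
        (F : Set (Cantor × Cantor)) ⊆ (C : Set (Cantor × Cantor)) →
        h.symm ⟨F, hF⟩ ∈ V) := by
  classical
  obtain ⟨x₀, hx₀⟩ := hne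
  set G₀ : ↥Cc := h x₀ with hG₀def
  -- the preimage of V under h.symm is open around G₀
  have hWopen : IsOpen (h.symm ⁻¹' V) := hV.preimage h.symm.continuous
  have hG₀W : G₀ ∈ h.symm ⁻¹' V := by
    simp only [Set.mem_preimage, hG₀def, Homeomorph.symm_apply_apply]
    exact hx₀
  obtain ⟨ε, hε, hball⟩ := Metric.isOpen_iff.mp hWopen G₀ hG₀W
  obtain ⟨N, hN⟩ := key_mod (ε / 2) (by linarith)
  -- F₀ : the target compact set
  set F₀ : Set (Cantor × Cantor) := ((G₀ : NonemptyCompacts (Cantor × Cantor)) :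
    Set (Cantor × Cantor)) with hF₀def
  have hF₀proj : Prod.fst '' F₀ = Set.univ := G₀.2
  have hfiber : ∀ x : Cantor, ∃ y, (x, y) ∈ F₀ := by
    intro x
    have : x ∈ Prod.fst '' F₀ := hF₀proj ▸ Set.mem_univ x
    obtain ⟨p, hp, hpx⟩ := this
    exact ⟨p.2, by rwa [← hpx, Prod.mk.eta]⟩
  -- the selection function
  set P : (Fin N → Bool) → (Fin N → Bool) → Prop :=
    fun s v => ∃ p ∈ F₀, p.1 ∈ cylC N s ∧ p.2 ∈ cylC N v with hPdef
  have hyex : ∀ s : Fin N → Bool, ∃ y, (extC N s, y) ∈ F₀ := fun s => hfiber _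
  set ys : (Fin N → Bool) → Cantor := fun s => (hyex s).choose with hysdef
  have hys : ∀ s, (extC N s, ys s) ∈ F₀ := fun s => (hyex s).choose_spec
  set tr : Cantor → (Fin N → Bool) := fun y i => y i with htrdef
  set g : (Fin N → Bool) → (Fin N → Bool) → (Fin N → Bool) :=
    fun s v => if P s v then v else tr (ys s) with hgdef
  have hgP : ∀ s v, P s (g s v) := by
    intro s v
    by_cases hp : P s v
    · simpa [hgdef, hp] using hp
    · simp only [hgdef, hp, if_false]
      exact ⟨(extC N s, ys s), hys s, extC_mem N s, fun i => rfl⟩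
  have hgeq : ∀ s v, P s v → g s v = v := by
    intro s v hp; simp [hgdef, hp]
  -- the set C
  set Cs : Set (Cantor × Cantor) :=
    ⋃ p : (Fin N → Bool) × (Fin N → Bool), dcylC N p.1 p.2 ×ˢ cylC N (g p.1 p.2) with hCsdef
  -- every point of Cantor is in a unique double cylinder
  have hmemd : ∀ x : Cantor, x ∈ dcylC N (fun i => x i) (fun i => x (N + i)) :=
    fun x => ⟨fun i => rfl, fun i => rfl⟩
  have huniq : ∀ (x : Cantor) (s v : Fin N → Bool), x ∈ dcylC N s v →
      s = (fun i : Fin N => x i) ∧ v = (fun i : Fin N => x (N + i)) := by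
    intro x s v hx
    exact ⟨funext fun i => (hx.1 i).symm, funext fun i => (hx.2 i).symm⟩
  -- C is compact and nonempty
  have hCscompact : IsCompact Cs := by
    refine isCompact_iUnion fun p => ?_
    exact ((isClopen_dcylC N p.1 p.2).1.isCompact).prod (isClopen_cylC N (g p.1 p.2)).1.isCompact
  have hCsmem : ∀ x : Cantor,
      (x, extC N (g (fun i => x i) (fun i => x (N + i)))) ∈ Cs := by
    intro x
    exact Set.mem_iUnion.mpr ⟨((fun i : Fin N => x i), (fun i : Fin N => x (N + i))),
      Set.mk_mem_prod (hmemd x) (extC_mem N _)⟩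
  have hCsne : Cs.Nonempty := ⟨_, hCsmem (fun _ => false)⟩
  refine ⟨⟨⟨Cs, hCscompact⟩, hCsne⟩, ?_, ?_, ?_⟩
  · -- C ∈ Cc
    apply Set.eq_univ_of_forall
    intro x
    exact ⟨_, hCsmem x, rfl⟩
  · -- finite union of clopen rectangles
    set ι := (Fin N → Bool) × (Fin N → Bool)
    set e : Fin (Fintype.card ι) ≃ ι := (Fintype.equivFin ι).symm with hedef
    refine ⟨Fintype.card ι, fun i => dcylC N (e i).1 (e i).2,
      fun i => cylC N (g (e i).1 (e i).2), fun i => ⟨isClopen_dcylC N _ _, isClopen_cylC N _⟩, ?_⟩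
    show Cs = _
    rw [hCsdef]
    exact (e.surjective.iUnion_comp fun p => dcylC N p.1 p.2 ×ˢ cylC N (g p.1 p.2)).symm
  · -- the key property
    intro F hF hFC
    apply hball
    rw [Metric.mem_ball, Subtype.dist_eq, Metric.NonemptyCompacts.dist_eq]
    have hFne : (F : Set (Cantor × Cantor)).Nonempty := F.nonempty
    have hFproj : Prod.fst '' (F : Set (Cantor × Cantor)) = Set.univ := hF
    have hFfiber : ∀ x : Cantor, ∃ y, (x, y) ∈ (F : Set (Cantor × Cantor)) := by
      intro x
      have : x ∈ Prod.fst '' (F : Set (Cantor × Cantor)) := hFproj ▸ Set.mem_univ x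
      obtain ⟨p, hp, hpx⟩ := this
      exact ⟨p.2, by rwa [← hpx, Prod.mk.eta]⟩
    have hle : Metric.hausdorffDist (F : Set (Cantor × Cantor)) F₀ ≤ ε / 2 := by
      apply Metric.hausdorffDist_le_of_mem_dist (by linarith)
      · -- every point of F is close to F₀
        intro p hp
        obtain ⟨sv, hpsv⟩ := Set.mem_iUnion.mp (hFC hp)
        obtain ⟨q, hqF₀, hq1, hq2⟩ := hgP sv.1 sv.2
        refine ⟨q, hqF₀, ?_⟩
        rw [Prod.dist_eq]
        have h1 : dist p.1 q.1 < ε / 2 := by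
          apply hN
          intro i hi
          exact (hpsv.1.1 ⟨i, hi⟩).trans (hq1 ⟨i, hi⟩).symm
        have h2 : dist p.2 q.2 < ε / 2 := by
          apply hN
          intro i hi
          exact (hpsv.2 ⟨i, hi⟩).trans (hq2 ⟨i, hi⟩).symm
        exact le_trans (max_le h1.le h2.le) le_rfl
      · -- every point of F₀ is close to F
        intro q hq
        set s : Fin N → Bool := fun i => q.1 i with hsdef
        set v : Fin N → Bool := fun i => q.2 i with hvdef
        have hPsv : P s v := ⟨q, hq, fun i => rfl, fun i => rfl⟩
        -- a point of Cantor in the double cylinder (s, v)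
        set x' : Cantor := fun i =>
          if h1 : i < N then s ⟨i, h1⟩ else if h2 : i - N < N then v ⟨i - N, h2⟩ else false
          with hx'def
        have hx' : x' ∈ dcylC N s v := by
          refine ⟨fun i => ?_, fun i => ?_⟩
          · simp [hx'def, i.isLt]
          · have h1 : ¬ (N + (i : ℕ) < N) := by omega
            have h2 : N + (i : ℕ) - N = (i : ℕ) := by omega
            simp only [hx'def, h1, dif_neg, not_false_iff, h2, i.isLt, dif_pos]
        obtain ⟨y', hy'⟩ := hFfiber x'
        refine ⟨(x', y'), hy', ?_⟩
        -- (x', y') lies in C, in the rectangle over (s, v)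
        obtain ⟨sv, hpsv⟩ := Set.mem_iUnion.mp (hFC hy')
        obtain ⟨hs'eq, hv'eq⟩ := huniq x' sv.1 sv.2 hpsv.1
        obtain ⟨hseq, hveq⟩ := huniq x' s v hx'
        have hsv1 : sv.1 = s := hs'eq.trans hseq.symm
        have hsv2 : sv.2 = v := hv'eq.trans hveq.symm
        have hy'cyl : y' ∈ cylC N v := by
          have := hpsv.2
          rwa [hsv1, hsv2, hgeq s v hPsv] at this
        rw [Prod.dist_eq]
        have h1 : dist q.1 x' < ε / 2 := by
          apply hN
          intro i hi
          have hh := hx'.1 ⟨i, hi⟩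
          rw [hsdef] at hh
          exact hh.symm
        have h2 : dist q.2 y' < ε / 2 := by
          apply hN
          intro i hi
          have hh := hy'cyl ⟨i, hi⟩
          rw [hvdef] at hh
          exact hh.symm
        exact le_trans (max_le h1.le h2.le) le_rfl
    calc Metric.hausdorffDist (F : Set (Cantor × Cantor)) F₀ ≤ ε / 2 := hle
      _ < ε := by linarith
end

section
/- Let X be a compact metrizable space and I a σ-ideal of compact subsets of X (hereditary and closed under countable compact unions) such that the family J = {B Borel : every compact subset of B is in I} is a σ-ideal of Borel sets containing all singletons, has the inner approximation property, and is ccc. Then every Borel set B ∈ J is contained in a Gδ set G with G ∈ J. -/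
/-- The Borel σ-ideal induced by a family `I` of compact sets:
Borel sets all of whose compact subsets are in `I`. -/
def borelIdeal {X : Type*} [TopologicalSpace X] [MeasurableSpace X]
    (I : Set (Set X)) : Set (Set X) :=
  {B | MeasurableSet B ∧ ∀ K ⊆ B, IsCompact K → K ∈ I}

/-- If `I` is a σ-ideal of compact sets in a compact metrizable space `X`
whose induced Borel family `J = borelIdeal I` is a σ-ideal containing all
singletons, has the inner approximation property and is ccc, then every Borel
set in `J` is contained in a `Gδ` set belonging to `J`. -/
theorem stmt8 {X : Type*} [MetricSpace X] [CompactSpace X]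
    [MeasurableSpace X] [BorelSpace X]
    (I : Set (Set X))
    (hIcpt : ∀ K ∈ I, IsCompact K)
    (hIher : ∀ K ∈ I, ∀ K' ⊆ K, IsCompact K' → K' ∈ I)
    (hIσ : ∀ K : ℕ → Set X, (∀ n, K n ∈ I) → IsCompact (⋃ n, K n) →
      (⋃ n, K n) ∈ I)
    (hsing : ∀ x : X, {x} ∈ borelIdeal I)
    (hσ : ∀ B : ℕ → Set X, (∀ n, B n ∈ borelIdeal I) → (⋃ n, B n) ∈ borelIdeal I)
    (hinner : ∀ B : Set X, MeasurableSet B → B ∉ borelIdeal I →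
      ∃ K ⊆ B, IsCompact K ∧ K ∉ borelIdeal I)
    (hccc : ∀ 𝒜 : Set (Set X), (∀ A ∈ 𝒜, MeasurableSet A ∧ A ∉ borelIdeal I) →
      𝒜.PairwiseDisjoint id → 𝒜.Countable) :
    ∀ B ∈ borelIdeal I, ∃ G : Set X, IsGδ G ∧ B ⊆ G ∧ G ∈ borelIdeal I := by
  intro B hB
  set J := borelIdeal I with hJdef
  -- hereditarity of J for measurable subsets
  have hered : ∀ A C : Set X, MeasurableSet A → A ⊆ C → C ∈ J → A ∈ J := by
    intro A C hAm hAC hC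
    exact ⟨hAm, fun K hK hKc => hC.2 K (hK.trans hAC) hKc⟩
  -- empty set is in I and in J
  have hemptyI : (∅ : Set X) ∈ I := hB.2 ∅ (Set.empty_subset _) isCompact_empty
  have hemptyJ : (∅ : Set X) ∈ J :=
    ⟨MeasurableSet.empty, fun K hK _ => by
      rw [Set.subset_empty_iff] at hK; rwa [hK]⟩
  -- compact sets in I are in J
  have hIJ : ∀ K : Set X, IsCompact K → K ∈ I → K ∈ J := by
    intro K hKc hKI
    exact ⟨hKc.isClosed.measurableSet, fun K' hK' hK'c => hIher K hKI K' hK' hK'c⟩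
  -- the collection of candidate families
  set S : Set (Set (Set X)) :=
    {𝒜 | (∀ A ∈ 𝒜, IsCompact A ∧ A ∉ J ∧ Disjoint A B) ∧ 𝒜.PairwiseDisjoint id}
    with hSdef
  obtain ⟨𝒜, h𝒜max⟩ : ∃ m, Maximal (· ∈ S) m := by
    apply zorn_subset
    intro c hcS hchain
    refine ⟨⋃₀ c, ⟨?_, ?_⟩, fun s hs => Set.subset_sUnion_of_mem hs⟩
    · rintro A ⟨𝒜', h𝒜', hA⟩
      exact (hcS h𝒜').1 A hA
    · rintro A ⟨𝒜₁, h𝒜₁, hA₁⟩ A' ⟨𝒜₂, h𝒜₂, hA₂⟩ hne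
      rcases hchain.total h𝒜₁ h𝒜₂ with h | h
      · exact (hcS h𝒜₂).2 (h hA₁) hA₂ hne
      · exact (hcS h𝒜₁).2 hA₁ (h hA₂) hne
  have h𝒜 := h𝒜max.prop
  -- 𝒜 is countable by ccc
  have hcount : 𝒜.Countable := by
    apply hccc 𝒜 (fun A hA => ⟨(h𝒜.1 A hA).1.isClosed.measurableSet, (h𝒜.1 A hA).2.1⟩)
      h𝒜.2
  -- the Gδ set
  refine ⟨⋂ A ∈ 𝒜, Aᶜ, ?_, ?_, ?_⟩
  · exact IsGδ.biInter_of_isOpen hcount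
      (fun A hA => (h𝒜.1 A hA).1.isClosed.isOpen_compl)
  · intro x hx
    simp only [Set.mem_iInter, Set.mem_compl_iff]
    intro A hA
    exact fun hxA => ((h𝒜.1 A hA).2.2).ne_of_mem hxA hx rfl
  · -- G ∈ J
    have hGm : MeasurableSet (⋂ A ∈ 𝒜, Aᶜ) :=
      MeasurableSet.biInter hcount
        (fun A hA => (h𝒜.1 A hA).1.isClosed.measurableSet.compl)
    refine ⟨hGm, fun K hKG hKc => ?_⟩
    by_contra hKnI
    -- K ∉ J since K itself is a compact subset of K not in I
    have hKnJ : K ∉ J := fun hKJ => hKnI (hKJ.2 K Set.Subset.rfl hKc)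
    -- K \ B ∉ J
    have hKBm : MeasurableSet (K \ B) := hKc.isClosed.measurableSet.diff hB.1
    have hKBnJ : K \ B ∉ J := by
      intro hKBJ
      apply hKnJ
      have hKint : K ∩ B ∈ J := hered (K ∩ B) B (hKc.isClosed.measurableSet.inter hB.1)
        Set.inter_subset_right hB
      have : K ⊆ (K \ B) ∪ (K ∩ B) := by
        intro x hx
        by_cases hxB : x ∈ B
        · exact Or.inr ⟨hx, hxB⟩
        · exact Or.inl ⟨hx, hxB⟩
      refine hered K ((K \ B) ∪ (K ∩ B)) hKc.isClosed.measurableSet this ?_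
      have hu := hσ (fun n => if n = 0 then K \ B else K ∩ B) (by
        intro n; by_cases hn : n = 0 <;> simp [hn, hKBJ, hKint])
      have heq : (⋃ n, if n = 0 then K \ B else K ∩ B) = (K \ B) ∪ (K ∩ B) := by
        apply Set.Subset.antisymm
        · intro x hx
          obtain ⟨n, hn⟩ := Set.mem_iUnion.mp hx
          by_cases h0 : n = 0
          · simp [h0] at hn; exact Or.inl hn
          · simp [h0] at hn; exact Or.inr hn
        · rintro x (hx | hx)
          · exact Set.mem_iUnion.mpr ⟨0, by simp [hx]⟩
          · exact Set.mem_iUnion.mpr ⟨1, by simp [hx]⟩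
      rwa [heq] at hu
    -- inner approximation: get compact K' ⊆ K \ B, K' ∉ J
    obtain ⟨K', hK'sub, hK'c, hK'nJ⟩ := hinner (K \ B) hKBm hKBnJ
    -- K' is disjoint from every A ∈ 𝒜
    have hK'disj : ∀ A ∈ 𝒜, Disjoint K' A := by
      intro A hA
      rw [Set.disjoint_left]
      intro x hxK' hxA
      have hxG : x ∈ ⋂ A ∈ 𝒜, Aᶜ := hKG (hK'sub hxK').1
      simp only [Set.mem_iInter, Set.mem_compl_iff] at hxG
      exact hxG A hA hxA
    -- 𝒜 ∪ {K'} ∈ S, contradicting maximality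
    have hins : insert K' 𝒜 ∈ S := by
      constructor
      · rintro A (rfl | hA)
        · exact ⟨hK'c, hK'nJ, Set.disjoint_left.mpr fun x hx hxB => (hK'sub hx).2 hxB⟩
        · exact h𝒜.1 A hA
      · exact h𝒜.2.insert (fun A hA _ => hK'disj A hA)
    have : K' ∈ 𝒜 := h𝒜max.2 hins (Set.subset_insert _ _) (Set.mem_insert _ _)
    have : K' = ∅ := by
      have := hK'disj K' this
      simpa using disjoint_self.mp this
    exact hK'nJ (this ▸ hemptyJ)
end

section
/- Let X be a compact metrizable space, I a σ-ideal of compact sets in X with inner approximation property for the induced Borel σ-ideal Ĩ = {B Borel : K(B) ⊆ I}, and suppose Ĩ is ccc. Then every σ-ideal J of Borel sets on X with Ĩ ⊆ J (and X ∉ J) also has the inner approximation property: every Borel set not in J contains a compact set not in J. -/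
/-- Countable unions stay in a σ-ideal containing `∅`. -/
lemma sUnion_mem_ideal {X : Type*} (J : Set (Set X))
    (hJσ : ∀ B : ℕ → Set X, (∀ n, B n ∈ J) → (⋃ n, B n) ∈ J)
    (hJ0 : (∅ : Set X) ∈ J) {𝒜 : Set (Set X)} (hc : 𝒜.Countable)
    (hsub : 𝒜 ⊆ J) : ⋃₀ 𝒜 ∈ J := by
  rcases Set.eq_empty_or_nonempty 𝒜 with h | h
  · simpa [h] using hJ0
  · obtain ⟨f, hf⟩ := Set.Countable.exists_eq_range hc h
    have : ⋃₀ 𝒜 = ⋃ n, f n := by rw [hf, Set.sUnion_range]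
    rw [this]
    exact hJσ f fun n => hsub (by rw [hf]; exact Set.mem_range_self n)

/-- If `Ĩ = borelIdeal I` is ccc and has the inner approximation property,
then every σ-ideal `J` of Borel sets with `Ĩ ⊆ J` and `X ∉ J` also has the
inner approximation property: every Borel set not in `J` contains a compact
set not in `J`. -/
theorem stmt9 {X : Type*} [MetricSpace X] [CompactSpace X]
    [MeasurableSpace X] [BorelSpace X]
    (I : Set (Set X))
    (hIcpt : ∀ K ∈ I, IsCompact K)
    (hIher : ∀ K ∈ I, ∀ K' ⊆ K, IsCompact K' → K' ∈ I)
    (hIσ : ∀ K : ℕ → Set X, (∀ n, K n ∈ I) → IsCompact (⋃ n, K n) →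
      (⋃ n, K n) ∈ I)
    (hinner : ∀ B : Set X, MeasurableSet B → B ∉ borelIdeal I →
      ∃ K ⊆ B, IsCompact K ∧ K ∉ borelIdeal I)
    (hccc : ∀ 𝒜 : Set (Set X), (∀ A ∈ 𝒜, MeasurableSet A ∧ A ∉ borelIdeal I) →
      𝒜.PairwiseDisjoint id → 𝒜.Countable)
    (J : Set (Set X))
    (hJBor : ∀ B ∈ J, MeasurableSet B)
    (hJdown : ∀ B ∈ J, ∀ B' : Set X, MeasurableSet B' → B' ⊆ B → B' ∈ J)
    (hJσ : ∀ B : ℕ → Set X, (∀ n, B n ∈ J) → (⋃ n, B n) ∈ J)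
    (hJI : borelIdeal I ⊆ J)
    (hJX : Set.univ ∉ J) :
    ∀ B : Set X, MeasurableSet B → B ∉ J → ∃ K ⊆ B, IsCompact K ∧ K ∉ J := by
  intro B hBmeas hBJ
  -- First dispose of the degenerate case `∅ ∉ I`.
  by_cases hI0 : (∅ : Set X) ∈ I
  case neg =>
    -- then `borelIdeal I = ∅`
    have hItriv : ∀ A : Set X, A ∉ borelIdeal I := by
      intro A hA
      exact hI0 (hA.2 ∅ (Set.empty_subset A) isCompact_empty)
    by_cases hJ0 : (∅ : Set X) ∈ J
    · -- ccc forces `X` to be countable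
      have hXc : (Set.univ : Set X).Countable := by
        have hcount := hccc (Set.range fun x : X => ({x} : Set X))
          (by rintro A ⟨x, rfl⟩; exact ⟨measurableSet_singleton x, hItriv _⟩)
          (by
            rintro A ⟨x, rfl⟩ A' ⟨y, rfl⟩ hne
            simp only [id]
            exact Set.disjoint_singleton.2 fun h => hne (by rw [h]))
        have hinj : Function.Injective fun x : X => ({x} : Set X) := fun a b h =>
          Set.singleton_eq_singleton_iff.1 h
        have := hcount.preimage hinj
        simpa using this
      -- suppose every compact subset of `B` is in `J`; derive `B ∈ J`
      by_contra hcon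
      push_neg at hcon
      have hBsub : B = ⋃₀ ((fun x : X => ({x} : Set X)) '' B) := by
        rw [Set.sUnion_image, Set.biUnion_of_singleton]
      have hBJ' : B ∈ J := by
        rw [hBsub]
        refine sUnion_mem_ideal J hJσ hJ0 ((hXc.mono (Set.subset_univ B)).image _) ?_
        rintro A ⟨x, hx, rfl⟩
        exact hcon {x} (Set.singleton_subset_iff.2 hx) isCompact_singleton
      exact hBJ hBJ'
    · exact ⟨∅, Set.empty_subset B, isCompact_empty, hJ0⟩
  case pos =>
    have hbI0 : (∅ : Set X) ∈ borelIdeal I := by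
      refine ⟨MeasurableSet.empty, fun K hK _ => ?_⟩
      rw [Set.subset_empty_iff.1 hK]; exact hI0
    have hJ0 : (∅ : Set X) ∈ J := hJI hbI0
    -- Zorn: a maximal pairwise disjoint family of Borel sets in `J \ Ĩ`.
    set T : Set (Set X) := {A | MeasurableSet A ∧ A ∈ J ∧ A ∉ borelIdeal I} with hT
    set S : Set (Set (Set X)) := {𝒜 | 𝒜 ⊆ T ∧ 𝒜.PairwiseDisjoint id} with hS
    obtain ⟨ℛ, hℛmax⟩ : ∃ ℛ, Maximal (· ∈ S) ℛ := by
      apply zorn_subset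
      intro c hcS hchain
      refine ⟨⋃₀ c, ⟨?_, ?_⟩, fun s hs => Set.subset_sUnion_of_mem hs⟩
      · rintro A ⟨𝒜, h𝒜, hA⟩
        exact (hcS h𝒜).1 hA
      · rintro A ⟨𝒜, h𝒜, hA⟩ A' ⟨𝒜', h𝒜', hA'⟩ hne
        rcases hchain.total h𝒜 h𝒜' with h | h
        · exact (hcS h𝒜').2 (h hA) hA' hne
        · exact (hcS h𝒜).2 hA (h hA') hne
    have hℛS : ℛ ∈ S := hℛmax.1
    have hℛc : ℛ.Countable :=
      hccc ℛ (fun A hA => ⟨(hℛS.1 hA).1, (hℛS.1 hA).2.2⟩) hℛS.2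
    -- enumerate `insert ∅ ℛ`
    obtain ⟨f, hf⟩ : ∃ f : ℕ → Set X, insert ∅ ℛ = Set.range f :=
      Set.Countable.exists_eq_range (hℛc.insert ∅) ⟨∅, Set.mem_insert _ _⟩
    have hfJ : ∀ n, f n ∈ J := by
      intro n
      have : f n ∈ insert ∅ ℛ := by rw [hf]; exact Set.mem_range_self n
      rcases this with h | h
      · rw [h]; exact hJ0
      · exact (hℛS.1 h).2.1
    have hfmeas : ∀ n, MeasurableSet (f n) := fun n => hJBor _ (hfJ n)
    set C : Set X := (⋃ n, f n)ᶜ with hC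
    have hCmeas : MeasurableSet C := (MeasurableSet.iUnion hfmeas).compl
    -- key claim: for Borel `A`, `A ∈ J ↔ A ∩ C ∈ Ĩ`
    have hkey : ∀ A : Set X, MeasurableSet A → (A ∈ J ↔ A ∩ C ∈ borelIdeal I) := by
      intro A hAmeas
      constructor
      · intro hAJ
        by_contra hAC
        -- `A ∩ C` would extend the maximal family
        have hACmeas : MeasurableSet (A ∩ C) := hAmeas.inter hCmeas
        have hACJ : A ∩ C ∈ J := hJdown A hAJ _ hACmeas Set.inter_subset_left
        have hACT : A ∩ C ∈ T := ⟨hACmeas, hACJ, hAC⟩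
        have hdisj : ∀ R ∈ ℛ, Disjoint (A ∩ C) R := by
          intro R hR
          have hRsub : R ⊆ ⋃ n, f n := by
            have : R ∈ Set.range f := by rw [← hf]; exact Set.mem_insert_of_mem _ hR
            obtain ⟨n, rfl⟩ := this
            exact Set.subset_iUnion f n
          exact Set.disjoint_left.2 fun x hx hxR => hx.2 (hRsub hxR)
        have hS' : insert (A ∩ C) ℛ ∈ S := by
          constructor
          · exact Set.insert_subset hACT hℛS.1
          · intro P hP Q hQ hne
            rcases hP with rfl | hP <;> rcases hQ with rfl | hQ
            · exact absurd rfl hne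
            · exact hdisj Q hQ
            · exact (hdisj P hP).symm
            · exact hℛS.2 hP hQ hne
        have hmem : A ∩ C ∈ ℛ :=
          hℛmax.2 hS' (Set.subset_insert _ _) (Set.mem_insert _ _)
        -- but `A ∩ C` is disjoint from itself, hence empty, contradicting `A ∩ C ∉ Ĩ`
        have hsub : A ∩ C ⊆ ⋃ n, f n := by
          have : A ∩ C ∈ Set.range f := by rw [← hf]; exact Set.mem_insert_of_mem _ hmem
          obtain ⟨n, hn⟩ := this
          rw [← hn]; exact Set.subset_iUnion f n
        have hempty : A ∩ C = ∅ := by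
          ext x
          simp only [Set.mem_empty_iff_false, iff_false]
          intro hx
          exact hx.2 (hsub hx)
        rw [hempty] at hAC
        exact hAC hbI0
      · intro hAC
        -- `A = (A ∩ C) ∪ ⋃ (A ∩ f n) ∈ J`
        have hACJ : A ∩ C ∈ J := hJI hAC
        set g : ℕ → Set X := fun n => Nat.rec (A ∩ C) (fun m _ => A ∩ f m) n with hg
        have hgJ : ∀ n, g n ∈ J := by
          intro n
          cases n with
          | zero => exact hACJ
          | succ m => exact hJdown _ (hfJ m) _ (hAmeas.inter (hfmeas m)) Set.inter_subset_right
        have hAsub : A ⊆ ⋃ n, g n := by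
          intro x hx
          by_cases hxC : x ∈ C
          · exact Set.mem_iUnion.2 ⟨0, hx, hxC⟩
          · have : x ∈ ⋃ n, f n := not_not.1 hxC
            obtain ⟨n, hn⟩ := Set.mem_iUnion.1 this
            exact Set.mem_iUnion.2 ⟨n + 1, hx, hn⟩
        exact hJdown _ (hJσ g hgJ) A hAmeas hAsub
    -- conclude
    have hBC : B ∩ C ∉ borelIdeal I := fun h => hBJ ((hkey B hBmeas).2 h)
    obtain ⟨K, hKsub, hKcpt, hKI⟩ :=
      hinner (B ∩ C) (hBmeas.inter hCmeas) hBC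
    refine ⟨K, hKsub.trans Set.inter_subset_left, hKcpt, ?_⟩
    intro hKJ
    have hKmeas : MeasurableSet K := hKcpt.isClosed.measurableSet
    have : K ∩ C ∈ borelIdeal I := (hkey K hKmeas).1 hKJ
    have hKC : K ∩ C = K := Set.inter_eq_left.2 (hKsub.trans Set.inter_subset_right)
    rw [hKC] at this
    exact hKI this
end

section
/- Let X be a compact metrizable space, γ a subadditive capacity on X (monotone, γ(∅)=0, continuous upwards on increasing sequences of arbitrary sets, continuous downwards on decreasing sequences of compact sets, and γ(A∪B) ≤ γ(A)+γ(B)), and Φ : 2^ℕ → K(X) continuous with pairwise disjoint values. Then γ'(A) = sup_{t∈2^ℕ} γ(A ∩ Φ(t)) is again a subadditive capacity on X. -/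
open TopologicalSpace Filter Topology

/-- If `γ` is a subadditive capacity on a compact metrizable space `X` and
`Φ : 2^ℕ → K(X)` is continuous with pairwise disjoint values, then
`γ'(A) = sup_{t ∈ 2^ℕ} γ(A ∩ Φ(t))` is again a subadditive capacity on `X`. -/
theorem stmt11 {X : Type*} [MetricSpace X] [CompactSpace X]
    (γ : Set X → NNReal)
    (hmono : ∀ A B : Set X, A ⊆ B → γ A ≤ γ B)
    (hempty : γ ∅ = 0)
    (hup : ∀ A : ℕ → Set X, Monotone A → γ (⋃ n, A n) = ⨆ n, γ (A n))
    (hdown : ∀ K : ℕ → Set X, (∀ n, IsCompact (K n)) → Antitone K →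
      γ (⋂ n, K n) = ⨅ n, γ (K n))
    (hsub : ∀ A B : Set X, γ (A ∪ B) ≤ γ A + γ B)
    (Φ : Cantor → NonemptyCompacts X) (hΦ : Continuous Φ)
    (hdisj : ∀ s t : Cantor, s ≠ t → Disjoint (Φ s : Set X) (Φ t : Set X))
    (γ' : Set X → NNReal)
    (hγ' : ∀ A : Set X, γ' A = ⨆ t : Cantor, γ (A ∩ (Φ t : Set X))) :
    (∀ A B : Set X, A ⊆ B → γ' A ≤ γ' B) ∧
    γ' ∅ = 0 ∧
    (∀ A : ℕ → Set X, Monotone A → γ' (⋃ n, A n) = ⨆ n, γ' (A n)) ∧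
    (∀ K : ℕ → Set X, (∀ n, IsCompact (K n)) → Antitone K →
      γ' (⋂ n, K n) = ⨅ n, γ' (K n)) ∧
    (∀ A B : Set X, γ' (A ∪ B) ≤ γ' A + γ' B) := by
  classical
  have hbdd : ∀ A : Set X, BddAbove (Set.range fun t : Cantor => γ (A ∩ (Φ t : Set X))) := by
    intro A
    exact ⟨γ Set.univ, by rintro _ ⟨t, rfl⟩; exact hmono _ _ (Set.subset_univ _)⟩
  have hmono' : ∀ A B : Set X, A ⊆ B → γ' A ≤ γ' B := by
    intro A B h
    rw [hγ' A, hγ' B]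
    exact ciSup_mono (hbdd B) fun t => hmono _ _ (Set.inter_subset_inter_left _ h)
  have hle_univ : ∀ A : Set X, γ' A ≤ γ Set.univ := by
    intro A; rw [hγ' A]; exact ciSup_le fun t => hmono _ _ (Set.subset_univ _)
  have hge : ∀ (A : Set X) (t : Cantor), γ (A ∩ (Φ t : Set X)) ≤ γ' A := by
    intro A t; rw [hγ' A]; exact le_ciSup (hbdd A) t
  refine ⟨hmono', ?_, ?_, ?_, ?_⟩
  · rw [hγ' ∅]
    simp only [Set.empty_inter, hempty]
    exact ciSup_const
  · intro A hA
    apply le_antisymm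
    · rw [hγ' _]
      refine ciSup_le fun t => ?_
      have h1 : (⋃ n, A n) ∩ (Φ t : Set X) = ⋃ n, (A n ∩ (Φ t : Set X)) := by
        rw [Set.iUnion_inter]
      rw [h1, hup _ (fun m n h => Set.inter_subset_inter_left _ (hA h))]
      refine ciSup_le fun n => le_trans (hge (A n) t) ?_
      exact le_ciSup (f := fun n => γ' (A n)) ⟨γ Set.univ, by rintro _ ⟨n, rfl⟩; exact hle_univ _⟩ n
    · exact ciSup_le fun n => hmono' _ _ (Set.subset_iUnion A n)
  · intro K hKc hKa
    apply le_antisymm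
    · exact le_ciInf fun n => hmono' _ _ (Set.iInter_subset K n)
    · by_contra hcon
      push_neg at hcon
      obtain ⟨c, hc1, hc2⟩ := exists_between hcon
      have hchoice : ∀ n : ℕ, ∃ t : Cantor, c < γ (K n ∩ (Φ t : Set X)) := by
        intro n
        have h2 : c < γ' (K n) :=
          lt_of_lt_of_le hc2 (ciInf_le (OrderBot.bddBelow _) n)
        rw [hγ' _] at h2
        exact exists_lt_of_lt_ciSup h2
      choose tt htt using hchoice
      obtain ⟨t', φ, hφ, hconv⟩ := CompactSpace.tendsto_subseq tt
      set C : ℕ → Set X := fun j => K (φ j) ∩ (Φ (tt (φ j)) : Set X) with hCdef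
      set D : ℕ → Set X := fun m => closure (⋃ j, ⋃ (_ : m ≤ j), C j) with hDdef
      have hDc : ∀ m, IsCompact (D m) := fun m => isClosed_closure.isCompact
      have hDa : Antitone D := by
        intro m m' h
        exact closure_mono (Set.iUnion₂_subset fun j hj => Set.subset_iUnion₂ (s := fun j _ => C j) j (le_trans h hj))
      have hDK : ∀ m, D m ⊆ K m := by
        intro m
        refine ((hKc m).isClosed.closure_subset_iff).mpr ?_
        refine Set.iUnion₂_subset fun j hj => ?_
        exact Set.inter_subset_left.trans (hKa (hj.trans hφ.le_apply))
      have hDΦ : (⋂ m, D m) ⊆ (Φ t' : Set X) := by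
        intro x hx
        have hxm : ∀ m : ℕ, ∃ j, m ≤ j ∧ ∃ y ∈ C j, dist x y < 1 / (m + 1) := by
          intro m
          have hxD : x ∈ D m := Set.mem_iInter.mp hx m
          have hpos : (0 : ℝ) < 1 / (m + 1) := by positivity
          obtain ⟨y, hy, hdy⟩ := Metric.mem_closure_iff.mp hxD _ hpos
          obtain ⟨j, hj, hyj⟩ := Set.mem_iUnion₂.mp hy
          exact ⟨j, hj, y, hyj, hdy⟩
        choose j hj y hyC hdy using hxm
        have hjtend : Tendsto j atTop atTop := tendsto_atTop_mono hj tendsto_id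
        have htend : Tendsto (fun m => Φ (tt (φ (j m)))) atTop (𝓝 (Φ t')) :=
          ((hΦ.tendsto t').comp hconv).comp hjtend
        have hedist0 : Tendsto (fun m => edist (Φ (tt (φ (j m)))) (Φ t')) atTop (𝓝 0) := by
          have h3 := htend.edist (tendsto_const_nhds : Tendsto (fun _ : ℕ => Φ t') atTop (𝓝 (Φ t')))
          rwa [edist_self] at h3
        have h1 : Tendsto (fun m : ℕ => ENNReal.ofReal (1 / (m + 1))) atTop (𝓝 0) := by
          rw [← ENNReal.ofReal_zero]
          exact (ENNReal.continuous_ofReal.tendsto 0).comp tendsto_one_div_add_atTop_nhds_zero_nat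
        have hdist0 : Tendsto
            (fun m : ℕ => ENNReal.ofReal (1 / (m + 1)) + edist (Φ (tt (φ (j m)))) (Φ t'))
            atTop (𝓝 0) := by
          simpa using h1.add hedist0
        have hle : ∀ m : ℕ, EMetric.infEdist x (Φ t' : Set X) ≤
            ENNReal.ofReal (1 / (m + 1)) + edist (Φ (tt (φ (j m)))) (Φ t') := by
          intro m
          calc EMetric.infEdist x (Φ t' : Set X)
              ≤ EMetric.infEdist x (Φ (tt (φ (j m))) : Set X) +
                EMetric.hausdorffEdist ((Φ (tt (φ (j m)))) : Set X) (Φ t' : Set X) :=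
                EMetric.infEdist_le_infEdist_add_hausdorffEdist
            _ ≤ ENNReal.ofReal (1 / (m + 1)) + edist (Φ (tt (φ (j m)))) (Φ t') := by
                refine add_le_add ?_ le_rfl
                refine le_trans (EMetric.infEdist_le_edist_of_mem (hyC m).2) ?_
                rw [edist_dist]
                exact ENNReal.ofReal_le_ofReal (hdy m).le
        have hzero : EMetric.infEdist x (Φ t' : Set X) = 0 :=
          nonpos_iff_eq_zero.mp (ge_of_tendsto' hdist0 hle)
        exact (EMetric.mem_iff_infEdist_zero_of_closed (Φ t').isCompact.isClosed).mpr hzero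
      have hfinal : c ≤ γ' (⋂ n, K n) := by
        have h1 : c ≤ γ (⋂ m, D m) := by
          rw [hdown D hDc hDa]
          refine le_ciInf fun m => ?_
          exact le_trans (htt (φ m)).le
            (hmono _ _ ((Set.subset_iUnion₂ (s := fun j (_ : m ≤ j) => C j) m le_rfl).trans subset_closure))
        have h2 : (⋂ m, D m) ⊆ (⋂ n, K n) ∩ (Φ t' : Set X) := fun x hx =>
          ⟨Set.mem_iInter.mpr fun n => hDK n (Set.mem_iInter.mp hx n), hDΦ hx⟩
        exact le_trans h1 (le_trans (hmono _ _ h2) (hge _ t'))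
      exact absurd hfinal (not_le.mpr hc1)
  · intro A B
    rw [hγ' (A ∪ B)]
    refine ciSup_le fun t => ?_
    rw [Set.union_inter_distrib_right]
    exact le_trans (hsub _ _) (add_le_add (hge A t) (hge B t))
end

section
/- Let E be a separable metrizable space and L ⊆ P_t(E) a compact set of tight Borel probability measures (weak topology). Suppose A ⊆ L is a compact uniformly tight subset such that every compact subset of L disjoint from A is uniformly tight. Then L itself is uniformly tight. -/
/-!
Fix `ε`, a compact `K₀` carrying mass `≥ 1 - ε/3` under every measure of `A`, and radii
`δₙ ↓ 0`. By the portmanteau theorem `Wₙ = {ν | ν(thickening δₙ K₀) > 1 - 2ε/3}` is an open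
neighbourhood of `A`, so `L \ Wₙ` is a compact set disjoint from `A` and is uniformly tight, with
some compact `Bₙ` of mass `≥ 1 - ε/3`. A measure `μ ∈ L` either lies in every `Wₙ`, and then
`μ K₀ ≥ 1 - 2ε/3`, or it leaves `W₀` and charges `B₀`, or it lies in `Wₙ` but not in `Wₙ₊₁` and
then charges `Bₙ₊₁ ∩ cthickening δₙ K₀` with mass `≥ 1 - ε`. These sets shrink to `K₀`, so
`K₀ ∪ ⋃ₙ (Bₙ₊₁ ∩ cthickening δₙ K₀) ∪ B₀` is compact.
-/

open MeasureTheory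

def UnifTight {E : Type*} [TopologicalSpace E] [MeasurableSpace E]
    (S : Set (ProbabilityMeasure E)) : Prop :=
  ∀ ε : ℝ, 0 < ε → ∃ K : Set E, IsCompact K ∧ ∀ μ ∈ S, 1 - ε ≤ (μ K : ℝ)

def TightMeas {E : Type*} [TopologicalSpace E] [MeasurableSpace E]
    (μ : ProbabilityMeasure E) : Prop :=
  ∀ ε : ℝ, 0 < ε → ∃ K : Set E, IsCompact K ∧ 1 - ε ≤ (μ K : ℝ)

open Filter Set Metric
open scoped ENNReal Topology

theorem Nat.forall_or_not_zero_or_exists_not_succ (p : ℕ → Prop) :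
    (∀ n, p n) ∨ ¬p 0 ∨ ∃ n, p n ∧ ¬p (n + 1) := by
  by_contra! h
  obtain ⟨⟨n, hn⟩, h0, hsucc⟩ := h
  exact hn (Nat.rec h0 hsucc n)

theorem IsCompact.union_iUnion_of_tendsto_smallSets {X : Type*} [TopologicalSpace X]
    {K : Set X} (hK : IsCompact K) {R : ℕ → Set X} (hR : ∀ n, IsCompact (R n))
    (hRK : Tendsto R atTop (𝓝ˢ K).smallSets) : IsCompact (K ∪ ⋃ n, R n) := by
  refine isCompact_of_finite_subcover fun U hUo hcover => ?_
  obtain ⟨t₀, ht₀⟩ := hK.elim_finite_subcover U hUo (subset_union_left.trans hcover)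
  -- beyond some `N`, every `R n` lies in the finite subcover of `K`
  obtain ⟨N, hN⟩ := eventually_atTop.1 <| tendsto_smallSets_iff.1 hRK _ <|
    (isOpen_biUnion fun i _ => hUo i).mem_nhdsSet.2 ht₀
  choose t ht using fun n => (hR n).elim_finite_subcover U hUo
    (((subset_iUnion R n).trans subset_union_right).trans hcover)
  classical
  refine ⟨t₀ ∪ (Finset.range N).biUnion t, union_subset ?_ (iUnion_subset fun n => ?_)⟩
  · exact ht₀.trans (biUnion_subset_biUnion_left (by simp))
  rcases lt_or_ge n N with hn | hn
  · refine (ht n).trans (biUnion_subset_biUnion_left fun i hi => ?_)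
    simp only [Finset.coe_union, Finset.coe_biUnion, Finset.coe_range, mem_union, mem_iUnion]
    exact Or.inr ⟨n, hn, hi⟩
  · exact (hN n hn).trans (biUnion_subset_biUnion_left (by simp))

theorem IsCompact.tendsto_cthickening_smallSets {X ι : Type*} [PseudoMetricSpace X]
    {K : Set X} (hK : IsCompact K) {l : Filter ι} {δ : ι → ℝ} (hδ : Tendsto δ l (𝓝 0)) :
    Tendsto (fun i => cthickening (δ i) K) l (𝓝ˢ K).smallSets := by
  refine (hasBasis_nhdsSet_cthickening hK).smallSets.tendsto_right_iff.2 fun ε hε => ?_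
  filter_upwards [hδ.eventually (ge_mem_nhds hε)] with i hi
  exact cthickening_mono hi K

namespace MeasureTheory.ProbabilityMeasure

variable {Ω : Type*} [MeasurableSpace Ω]

theorem add_apply_le_one_add_apply_inter (μ : ProbabilityMeasure Ω) (s : Set Ω) {t : Set Ω}
    (ht : MeasurableSet t) : (μ s : ℝ) + μ t ≤ 1 + μ (s ∩ t) := by
  simp only [← measureReal_eq_coe_coeFn]
  rw [← measureReal_union_add_inter (s := s) ht]
  gcongr
  exact measureReal_le_one

theorem lowerSemicontinuous_apply_of_isOpen [TopologicalSpace Ω] [OpensMeasurableSpace Ω]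
    [HasOuterApproxClosed Ω] {G : Set Ω} (hG : IsOpen G) :
    LowerSemicontinuous fun ν : ProbabilityMeasure Ω => (ν G : ℝ) := by
  intro μ y hy
  rcases lt_or_ge y 0 with hy0 | hy0
  · exact Eventually.of_forall fun ν => hy0.trans_le (ν G).coe_nonneg
  have hcast : ∀ ν : ProbabilityMeasure Ω, y < ν G ↔ (y.toNNReal : ℝ≥0∞) < (ν : Measure Ω) G :=
    fun ν => by
      rw [← ennreal_coeFn_eq_coeFn_toMeasure, ENNReal.coe_lt_coe, ← NNReal.coe_lt_coe,
        Real.coe_toNNReal _ hy0]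
  filter_upwards [eventually_lt_of_lt_liminf
    (((hcast μ).1 hy).trans_le (le_liminf_measure_open_of_tendsto tendsto_id hG))] with ν hν
  exact (hcast ν).2 hν

theorem tendsto_apply_thickening_of_isClosed [PseudoMetricSpace Ω] [OpensMeasurableSpace Ω]
    (μ : ProbabilityMeasure Ω) {s : Set Ω} (hs : IsClosed s) :
    Tendsto (fun r => (μ (thickening r s) : ℝ)) (𝓝[>] 0) (𝓝 (μ s)) := by
  have := tendsto_measure_thickening_of_isClosed (μ := (μ : Measure Ω))
    ⟨1, one_pos, measure_ne_top _ _⟩ hs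
  simp only [← ennreal_coeFn_eq_coeFn_toMeasure, ENNReal.tendsto_coe] at this
  exact (NNReal.continuous_coe.tendsto _).comp this

theorem one_sub_three_mul_le_apply_of_thickening_le [PseudoMetricSpace Ω]
    [OpensMeasurableSpace Ω] (μ : ProbabilityMeasure Ω) {K : Set Ω} (hK : IsClosed K)
    {δ : ℕ → ℝ} (hδ : Tendsto δ atTop (𝓝[>] 0)) {B : ℕ → Set Ω} {ε : ℝ} (hε : 0 ≤ ε)
    (hB : ∀ n, (μ (thickening (δ n) K) : ℝ) ≤ 1 - 2 * ε → 1 - ε ≤ μ (B n)) :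
    1 - 3 * ε ≤ μ ((K ∪ ⋃ n, B (n + 1) ∩ cthickening (δ n) K) ∪ B 0) := by
  rcases Nat.forall_or_not_zero_or_exists_not_succ
    (fun n => 1 - 2 * ε < μ (thickening (δ n) K)) with hall | h0 | ⟨n, hn, hn'⟩
  · calc 1 - 3 * ε ≤ 1 - 2 * ε := by linarith
      _ ≤ μ K := ge_of_tendsto ((μ.tendsto_apply_thickening_of_isClosed hK).comp hδ)
          (Eventually.of_forall fun n => (hall n).le)
      _ ≤ _ := by gcongr; exact subset_union_left.trans subset_union_left
  · calc 1 - 3 * ε ≤ 1 - ε := by linarith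
      _ ≤ μ (B 0) := hB 0 (not_lt.1 h0)
      _ ≤ _ := by gcongr; exact subset_union_right
  · have hBn := hB (n + 1) (not_lt.1 hn')
    have hKn : 1 - 2 * ε < (μ (cthickening (δ n) K) : ℝ) :=
      hn.trans_le (by gcongr; exact thickening_subset_cthickening _ _)
    calc 1 - 3 * ε ≤ μ (B (n + 1) ∩ cthickening (δ n) K) := by
          linarith [μ.add_apply_le_one_add_apply_inter (B (n + 1))
            (t := cthickening (δ n) K) isClosed_cthickening.measurableSet]
      _ ≤ _ := by
          gcongr
          exact ((subset_iUnion (fun n => B (n + 1) ∩ cthickening (δ n) K) n).trans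
            subset_union_right).trans subset_union_left

end MeasureTheory.ProbabilityMeasure

theorem stmt13_general {E : Type*} [MetricSpace E]
    [MeasurableSpace E] [BorelSpace E]
    (L : Set (ProbabilityMeasure E)) (hLcpt : IsCompact L)
    (A : Set (ProbabilityMeasure E))
    (hAut : UnifTight A)
    (hrest : ∀ S ⊆ L, IsCompact S → Disjoint S A → UnifTight S) :
    UnifTight L := by
  intro ε hε
  obtain ⟨K₀, hK₀, hAK₀⟩ := hAut (ε / 3) (by positivity)
  obtain ⟨δ, -, hδpos, hδ⟩ := exists_seq_strictAnti_tendsto_nhdsWithin (0 : ℝ)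
  set W : ℕ → Set (ProbabilityMeasure E) :=
    fun n => {ν | 1 - 2 * (ε / 3) < (ν (thickening (δ n) K₀) : ℝ)}
  have hW : ∀ n, IsOpen (W n) := fun n =>
    (ProbabilityMeasure.lowerSemicontinuous_apply_of_isOpen isOpen_thickening).isOpen_preimage _
  have hAW : ∀ n, A ⊆ W n := fun n ν hν => calc
    1 - 2 * (ε / 3) < 1 - ε / 3 := by linarith
    _ ≤ ν K₀ := hAK₀ ν hν
    _ ≤ ν (thickening (δ n) K₀) := by gcongr; exact self_subset_thickening (hδpos n) K₀
  choose B hB hLB using fun n => hrest (L \ W n) sdiff_subset (hLcpt.diff (hW n))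
    (disjoint_sdiff_left.mono_right (hAW n)) (ε / 3) (by positivity)
  refine ⟨(K₀ ∪ ⋃ n, B (n + 1) ∩ cthickening (δ n) K₀) ∪ B 0, ?_, fun μ hμ => ?_⟩
  · refine (hK₀.union_iUnion_of_tendsto_smallSets
      (fun n => (hB (n + 1)).inter_right isClosed_cthickening) ?_).union (hB 0)
    exact (hK₀.tendsto_cthickening_smallSets (hδ.mono_right nhdsWithin_le_nhds)).smallSets_mono
      (Eventually.of_forall fun n => inter_subset_right)
  · have := μ.one_sub_three_mul_le_apply_of_thickening_le hK₀.isClosed hδ (by positivity)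
      fun n hn => hLB n μ ⟨hμ, not_lt.2 hn⟩
    linarith

/-- If `L ⊆ P_t(E)` is compact, `A ⊆ L` is compact and uniformly tight, and
every compact subset of `L` disjoint from `A` is uniformly tight, then `L`
itself is uniformly tight. -/
theorem stmt13 {E : Type*} [MetricSpace E] [TopologicalSpace.SeparableSpace E]
    [MeasurableSpace E] [BorelSpace E]
    (L : Set (ProbabilityMeasure E)) (hLcpt : IsCompact L)
    (hLt : ∀ μ ∈ L, TightMeas μ)
    (A : Set (ProbabilityMeasure E)) (hAcpt : IsCompact A) (hAL : A ⊆ L)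
    (hAut : UnifTight A)
    (hrest : ∀ S ⊆ L, IsCompact S → Disjoint S A → UnifTight S) :
    UnifTight L :=
  stmt13_general L hLcpt A hAut hrest
end

section
/- Let G be a Gδ subset of the Cantor space 2^ℕ. Then there exists a continuous map p : 2^ℕ → 2^ℕ such that (i) p restricted to G is a homeomorphic embedding into 2^ℕ ∖ Q and p maps 2^ℕ ∖ G into Q, where Q ⊆ 2^ℕ is the countable dense set of eventually-zero sequences, and (ii) for any two disjoint compact sets A, B ⊆ 2^ℕ, the intersection p(A) ∩ p(B) is finite. -/
/-- The countable dense set of eventually-zero sequences in `2^ℕ`,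
a homeomorphic copy of the rationals. -/
def Qrat : Set Cantor := {x | ∃ N, ∀ n, N ≤ n → x n = false}

/-!
Write `G = ⋂ n, H n` with `H n` open and decreasing, and partition each `H n` into blocks: the
minimal cylinders of length at least `n` contained in it. Let `p x` be the indicator sequence of
the blocks containing `x`. A point of `G` lies in one block at every level, so `p x` has
infinitely many ones, and these blocks form a neighbourhood basis at that point, which makes `p`
an embedding on `G`. A point outside `H k` lies in blocks of level `< k` only, one per level, so
`p x` is eventually zero. If `A` and `B` are disjoint compact sets, all cylinders of some length
`N` around points of `A` miss `B`, so only the finitely many blocks of length `< N` meet both `A`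
and `B`, and the sequences in `p '' A ∩ p '' B` are supported on their codes.
-/

open Set Filter Topology Encodable PiNat

lemma mem_Qrat_iff {z : Cantor} : z ∈ Qrat ↔ {n | z n = true}.Finite := by
  simp only [← Bool.not_eq_false, ← eventually_cofinite, Nat.cofinite_eq_atTop,
    eventually_atTop]
  rfl

lemma finite_setOf_subset_setOf_eq_true {β : Type*} {T : Set β} (hT : T.Finite) :
    {z : β → Bool | {m | z m = true} ⊆ T}.Finite := by
  refine Finite.preimage (fun z _ w _ hzw => funext fun m => ?_) hT.finite_subsets
  exact Bool.eq_iff_iff.2 (Set.ext_iff.1 hzw m)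

lemma IsGδ.exists_antitone_isOpen {X : Type*} [TopologicalSpace X] {G : Set X} (hG : IsGδ G) :
    ∃ H : ℕ → Set X, (∀ n, IsOpen (H n)) ∧ Antitone H ∧ G = ⋂ n, H n := by
  obtain ⟨f, hf, rfl⟩ := hG.eq_iInter_nat
  refine ⟨fun n => ⋂ k ∈ Iic n, f k, fun n => (finite_Iic n).isOpen_biInter fun k _ => hf k,
    fun m n hmn => biInter_mono (Iic_subset_Iic.2 hmn) fun _ _ => subset_rfl, ?_⟩
  ext x
  simp only [mem_iInter, mem_Iic]
  exact ⟨fun h n k _ => h k, fun h n => h n n le_rfl⟩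

section IndicatorSeq

variable {X ι : Type*} [Encodable ι]

open scoped Classical in
/-- The paper's diagonal map `(p₁, p₂, …)`, with `2^{ℕ×ℕ}` identified with `2^ℕ`
via `encode`. -/
noncomputable def indicatorSeq (U : ι → Set X) (x : X) : ℕ → Bool :=
  fun m => decide (∃ i, encode i = m ∧ x ∈ U i)

variable {U : ι → Set X}

lemma indicatorSeq_eq_true {x : X} {m : ℕ} :
    indicatorSeq U x m = true ↔ ∃ i, encode i = m ∧ x ∈ U i := by
  simp [indicatorSeq]

lemma setOf_indicatorSeq_eq_true (x : X) :
    {m | indicatorSeq U x m = true} = encode '' {i | x ∈ U i} := by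
  ext m
  simp [indicatorSeq_eq_true, and_comm]

lemma indicatorSeq_mem_Qrat_iff {x : X} : indicatorSeq U x ∈ Qrat ↔ {i | x ∈ U i}.Finite := by
  rw [mem_Qrat_iff, setOf_indicatorSeq_eq_true, finite_image_iff encode_injective.injOn]

lemma finite_image_inter_image {A B : Set X}
    (h : {i | (U i ∩ A).Nonempty ∧ (U i ∩ B).Nonempty}.Finite) :
    (indicatorSeq U '' A ∩ indicatorSeq U '' B).Finite := by
  refine (finite_setOf_subset_setOf_eq_true (h.image encode)).subset ?_
  rintro _ ⟨⟨x, hxA, rfl⟩, y, hyB, hxy⟩ m hm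
  obtain ⟨i, rfl, hxi⟩ := indicatorSeq_eq_true.1 hm
  have hyi : indicatorSeq U y (encode i) = true := hxy ▸ hm
  obtain ⟨j, hji, hyj⟩ := indicatorSeq_eq_true.1 hyi
  rw [encode_injective hji] at hyj
  exact ⟨i, ⟨⟨x, hxi, hxA⟩, y, hyj, hyB⟩, rfl⟩

variable [TopologicalSpace X]

lemma continuous_indicatorSeq (hU : ∀ i, IsClopen (U i)) : Continuous (indicatorSeq U) := by
  refine continuous_pi fun m => (continuous_bool_rng true).2 ?_
  have hfin : (encode ⁻¹' {m} : Set ι).Finite :=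
    (subsingleton_singleton.preimage encode_injective).finite
  convert hfin.isClopen_biUnion fun i _ => hU i using 1
  ext x
  simp [indicatorSeq_eq_true]

lemma isInducing_indicatorSeq_restrict (hU : ∀ i, IsClopen (U i)) {S : Set X}
    (hbasis : ∀ x ∈ S, ∀ V ∈ 𝓝 x, ∃ i, x ∈ U i ∧ U i ⊆ V) :
    IsInducing (fun x : S => indicatorSeq U x) := by
  refine isInducing_iff_nhds.2 fun a =>
    le_antisymm (((continuous_indicatorSeq hU).comp continuous_subtype_val).tendsto a).le_comap ?_
  intro W hW
  rw [nhds_subtype, mem_comap] at hW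
  obtain ⟨V, hV, hVW⟩ := hW
  obtain ⟨i, hai, hiV⟩ := hbasis a a.2 V hV
  have hopen : IsOpen ((fun z : ℕ → Bool => z (encode i)) ⁻¹' {true}) :=
    (isOpen_discrete _).preimage (continuous_apply _)
  refine mem_comap.2 ⟨_, hopen.mem_nhds ?_, fun b hb => hVW (hiV ?_)⟩
  · exact indicatorSeq_eq_true.2 ⟨i, rfl, hai⟩
  · obtain ⟨j, hj, hbj⟩ := indicatorSeq_eq_true.1 hb
    rwa [← encode_injective hj]

end IndicatorSeq

namespace PiNat

variable {E : ℕ → Type*} [∀ n, TopologicalSpace (E n)] [∀ n, DiscreteTopology (E n)]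

lemma isClopen_cylinder (x : ∀ n, E n) (n : ℕ) : IsClopen (cylinder x n) := by
  refine ⟨?_, isOpen_cylinder E x n⟩
  rw [cylinder_eq_pi]
  exact isClosed_set_pi fun i _ => isClosed_discrete _

lemma exists_cylinder_subset {x : ∀ n, E n} {V : Set (∀ n, E n)} (hV : V ∈ 𝓝 x) :
    ∃ N, cylinder x N ⊆ V := by
  obtain ⟨_, ⟨y, N, rfl⟩, hx, hsub⟩ := (isTopologicalBasis_cylinders E).mem_nhds_iff.1 hV
  exact ⟨N, (mem_cylinder_iff_eq.1 hx).le.trans hsub⟩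

lemma _root_.IsCompact.exists_forall_disjoint_cylinder {A B : Set (∀ n, E n)} (hA : IsCompact A)
    (hB : IsClosed B) (hAB : Disjoint A B) : ∃ N, ∀ x ∈ A, Disjoint (cylinder x N) B := by
  choose! n hn using fun x (hx : x ∈ A) => exists_disjoint_cylinder hB (disjoint_left.1 hAB hx)
  obtain ⟨t, htA, hcover⟩ := hA.elim_nhds_subcover (fun x => cylinder x (n x))
    fun x _ => (isOpen_cylinder E x _).mem_nhds (self_mem_cylinder x _)
  refine ⟨t.sup n, fun y hy => ?_⟩
  obtain ⟨x, hxt, hyx⟩ := mem_iUnion₂.1 (hcover hy)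
  exact (hn x (htA x hxt)).symm.mono_left
    ((cylinder_anti y (Finset.le_sup hxt)).trans (mem_cylinder_iff_eq.1 hyx).le)

end PiNat

section Blocks

variable {α : Type*}

/-- Junk value `0` when no such `k` exists; it is only used for `x ∈ V` with `V` open. -/
noncomputable def blockLen (V : Set (ℕ → α)) (n : ℕ) (x : ℕ → α) : ℕ :=
  sInf {k | n ≤ k ∧ cylinder x k ⊆ V}

/-- The paper's `V_{n,i}`, indexed by the level `n` and the word `s` of the cylinder. -/
def block (H : ℕ → Set (ℕ → α)) (q : ℕ × List α) : Set (ℕ → α) :=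
  {x ∈ H q.1 | res x (blockLen (H q.1) q.1 x) = q.2}

variable {V : Set (ℕ → α)} {H : ℕ → Set (ℕ → α)} {n k : ℕ} {x y : ℕ → α}

lemma blockLen_le (hk : n ≤ k) (hsub : cylinder x k ⊆ V) : blockLen V n x ≤ k :=
  Nat.sInf_le ⟨hk, hsub⟩

lemma mem_block_blockLen (hx : x ∈ H n) : x ∈ block H (n, res x (blockLen (H n) n x)) :=
  ⟨hx, rfl⟩

lemma setOf_mem_block_infinite (hx : ∀ n, x ∈ H n) : {q | x ∈ block H q}.Infinite :=
  infinite_of_injective_forall_mem (f := fun n => (n, res x (blockLen (H n) n x)))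
    (fun _ _ h => (Prod.ext_iff.1 h).1) fun n => mem_block_blockLen (hx n)

lemma setOf_mem_block_finite (hH : Antitone H) (hx : x ∉ H k) : {q | x ∈ block H q}.Finite := by
  refine ((finite_Iio k).image fun n => (n, res x (blockLen (H n) n x))).subset ?_
  rintro ⟨n, s⟩ ⟨hxn, hs⟩
  exact ⟨n, lt_of_not_ge fun hkn => hx (hH hkn hxn), Prod.ext rfl hs⟩

variable [TopologicalSpace α] [DiscreteTopology α]

lemma le_blockLen_and_cylinder_subset (hV : IsOpen V) (hx : x ∈ V) (n : ℕ) :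
    n ≤ blockLen V n x ∧ cylinder x (blockLen V n x) ⊆ V := by
  obtain ⟨N, hN⟩ := exists_cylinder_subset (hV.mem_nhds hx)
  exact Nat.sInf_mem (s := {k | n ≤ k ∧ cylinder x k ⊆ V})
    ⟨max n N, le_max_left _ _, (cylinder_anti x (le_max_right _ _)).trans hN⟩

lemma blockLen_eq_of_mem_cylinder (hV : IsOpen V) (hx : x ∈ V)
    (hy : y ∈ cylinder x (blockLen V n x)) : blockLen V n y = blockLen V n x := by
  obtain ⟨hnx, hsubx⟩ := le_blockLen_and_cylinder_subset hV hx n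
  obtain ⟨hny, hsuby⟩ := le_blockLen_and_cylinder_subset hV (hsubx hy) n
  have hle : blockLen V n y ≤ blockLen V n x :=
    blockLen_le hnx ((mem_cylinder_iff_eq.1 hy).le.trans hsubx)
  refine le_antisymm hle (blockLen_le hny ?_)
  rwa [← mem_cylinder_iff_eq.1 (cylinder_anti x hle hy)]

lemma block_eq_cylinder {q : ℕ × List α} (hH : IsOpen (H q.1)) (hx : x ∈ block H q) :
    block H q = cylinder x (blockLen (H q.1) q.1 x) := by
  ext y
  constructor
  · rintro ⟨-, hy⟩
    have h : res y (blockLen (H q.1) q.1 y) = res x (blockLen (H q.1) q.1 x) := hy.trans hx.2.symm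
    have hlen : blockLen (H q.1) q.1 y = blockLen (H q.1) q.1 x := by
      simpa using congrArg List.length h
    rw [hlen] at h
    exact fun i hi => res_eq_res.1 h hi
  · intro hy
    refine ⟨(le_blockLen_and_cylinder_subset hH hx.1 _).2 hy, ?_⟩
    rw [blockLen_eq_of_mem_cylinder hH hx.1 hy, ← hx.2]
    exact res_eq_res.2 hy

lemma isClopen_block (hH : ∀ n, IsOpen (H n)) (q : ℕ × List α) : IsClopen (block H q) := by
  rcases (block H q).eq_empty_or_nonempty with h | ⟨x, hx⟩
  · rw [h]
    exact isClopen_empty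
  · rw [block_eq_cylinder (hH q.1) hx]
    exact isClopen_cylinder x _

lemma exists_block_subset (hH : ∀ n, IsOpen (H n)) (hx : ∀ n, x ∈ H n) (hV : V ∈ 𝓝 x) :
    ∃ q, x ∈ block H q ∧ block H q ⊆ V := by
  obtain ⟨N, hN⟩ := exists_cylinder_subset hV
  have hxq := mem_block_blockLen (hx N)
  refine ⟨_, hxq, ?_⟩
  rw [block_eq_cylinder (hH N) hxq]
  exact (cylinder_anti x (le_blockLen_and_cylinder_subset (hH N) (hx N) N).1).trans hN

lemma finite_setOf_block_meets [Finite α] (hH : ∀ n, IsOpen (H n)) {A B : Set (ℕ → α)}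
    (hA : IsCompact A) (hB : IsClosed B) (hAB : Disjoint A B) :
    {q | (block H q ∩ A).Nonempty ∧ (block H q ∩ B).Nonempty}.Finite := by
  obtain ⟨N, hN⟩ := hA.exists_forall_disjoint_cylinder hB hAB
  refine ((finite_Iio N).prod (List.finite_length_lt α N)).subset ?_
  rintro ⟨n, s⟩ ⟨⟨x, hxq, hxA⟩, y, hyq, hyB⟩
  have hlen : s.length = blockLen (H n) n x := by
    simpa using (congrArg List.length hxq.2).symm
  have hlt : blockLen (H n) n x < N := by
    by_contra! hle
    rw [block_eq_cylinder (hH n) hxq] at hyq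
    exact disjoint_left.1 (hN x hxA) (cylinder_anti x hle hyq) hyB
  exact ⟨(le_blockLen_and_cylinder_subset (hH n) hxq.1 n).1.trans_lt hlt, hlen.trans_lt hlt⟩

end Blocks

/-- For every `Gδ` set `G ⊆ 2^ℕ` there is a continuous `p : 2^ℕ → 2^ℕ`
embedding `G` into `2^ℕ ∖ Q`, mapping `2^ℕ ∖ G` into `Q`, and such that
images of disjoint compact sets meet in a finite set. -/
theorem stmt16 (G : Set Cantor) (hG : IsGδ G) :
    ∃ p : Cantor → Cantor, Continuous p ∧
      Topology.IsEmbedding (fun x : G => p x) ∧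
      p '' G ⊆ Qratᶜ ∧ p '' Gᶜ ⊆ Qrat ∧
      ∀ A B : Set Cantor, IsCompact A → IsCompact B → Disjoint A B →
        (p '' A ∩ p '' B).Finite := by
  obtain ⟨H, hHo, hHanti, rfl⟩ := hG.exists_antitone_isOpen
  have hclopen := isClopen_block hHo
  refine ⟨indicatorSeq (block H), continuous_indicatorSeq hclopen, ?_, ?_, ?_, ?_⟩
  · exact (isInducing_indicatorSeq_restrict hclopen fun x hx V hV =>
      exists_block_subset hHo (mem_iInter.1 hx) hV).isEmbedding
  · rintro _ ⟨x, hx, rfl⟩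
    exact indicatorSeq_mem_Qrat_iff.not.2 (setOf_mem_block_infinite (mem_iInter.1 hx))
  · rintro _ ⟨x, hx, rfl⟩
    obtain ⟨k, hk⟩ : ∃ k, x ∉ H k := by simpa using hx
    exact indicatorSeq_mem_Qrat_iff.2 (setOf_mem_block_finite hHanti hk)
  · intro A B hA hB hAB
    exact finite_image_inter_image (finite_setOf_block_meets hHo hA hB.isClosed hAB)
end

section
/- Let E, F be separable metrizable spaces and f : E → F a perfect continuous map onto a closed subspace of F. Then the induced map P(f) : P_t(E) → P_t(F), μ ↦ μ ∘ f⁻¹ (pushforward), has the property that if B ⊆ P_t(f(E)) is uniformly tight then P(f)⁻¹(B) is uniformly tight, and if A ⊆ P_t(E) is uniformly tight then P(f)(A) is uniformly tight. -/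
open MeasureTheory
open scoped NNReal

/-- If `f : E → F` is a perfect continuous map (closed, with compact fibers)
onto a closed subspace of `F`, then the pushforward map
`P(f) : P(E) → P(F)` preserves uniform tightness of sets in both the image
and the preimage direction. -/
theorem stmt17 {E F : Type*}
    [MetricSpace E] [TopologicalSpace.SeparableSpace E]
    [MeasurableSpace E] [BorelSpace E]
    [MetricSpace F] [TopologicalSpace.SeparableSpace F]
    [MeasurableSpace F] [BorelSpace F]
    (f : E → F) (hf : Continuous f) (hclosed : IsClosedMap f)
    (hfib : ∀ y : F, IsCompact (f ⁻¹' {y}))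
    (hreg : IsClosed (Set.range f))
    (Pf : ProbabilityMeasure E → ProbabilityMeasure F)
    (hPf : ∀ μ : ProbabilityMeasure E,
      Pf μ = μ.map (f := f) hf.measurable.aemeasurable) :
    (∀ B : Set (ProbabilityMeasure F), UnifTight B → UnifTight (Pf ⁻¹' B)) ∧
    (∀ A : Set (ProbabilityMeasure E), UnifTight A → UnifTight (Pf '' A)) := by
  have hproper : IsProperMap f :=
    isProperMap_iff_isClosedMap_and_compact_fibers.mpr ⟨hf, hclosed, hfib⟩
  constructor
  · intro B hB ε hε
    obtain ⟨K, hK, hKB⟩ := hB ε hε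
    refine ⟨f ⁻¹' K, hproper.isCompact_preimage hK, ?_⟩
    intro μ hμ
    have h1 : 1 - ε ≤ ((Pf μ) K : ℝ) := hKB _ hμ
    have h2 : ((Pf μ) : Measure F) K = (μ : Measure E) (f ⁻¹' K) := by
      rw [hPf μ]
      simp only [ProbabilityMeasure.toMeasure_map]
      exact Measure.map_apply hf.measurable hK.isClosed.measurableSet
    have h3 : ((Pf μ) K : ℝ≥0) = μ (f ⁻¹' K) := by
      simp only [ProbabilityMeasure.coeFn_def]
      rw [h2]
    calc 1 - ε ≤ ((Pf μ) K : ℝ) := h1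
      _ = (μ (f ⁻¹' K) : ℝ) := by exact_mod_cast h3
  · intro A hA ε hε
    obtain ⟨K, hK, hKA⟩ := hA ε hε
    refine ⟨f '' K, hK.image hf, ?_⟩
    rintro ν ⟨μ, hμ, rfl⟩
    have h1 : 1 - ε ≤ (μ K : ℝ) := hKA _ hμ
    have h2 : ((Pf μ) : Measure F) (f '' K) = (μ : Measure E) (f ⁻¹' (f '' K)) := by
      rw [hPf μ]
      simp only [ProbabilityMeasure.toMeasure_map]
      exact Measure.map_apply hf.measurable (hK.image hf).isClosed.measurableSet
    have hsub : (μ : Measure E) K ≤ (μ : Measure E) (f ⁻¹' (f '' K)) :=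
      measure_mono (Set.subset_preimage_image f K)
    have h3 : (μ K : ℝ≥0) ≤ (Pf μ) (f '' K) := by
      simp only [ProbabilityMeasure.coeFn_def]
      rw [h2]
      exact ENNReal.toNNReal_mono (measure_ne_top _ _) hsub
    calc 1 - ε ≤ (μ K : ℝ) := h1
      _ ≤ ((Pf μ) (f '' K) : ℝ) := by exact_mod_cast h3
end

section
/- Let M ⊆ 2^ℕ × 2^ℕ be a set that intersects every compact set C with π(C) = 2^ℕ (π the first projection), and let E = (2^ℕ × 2^ℕ) ∖ M. Assume moreover λ_t(M) = 0 for all t, where λ_t = δ_t ⊗ λ. Then the family {λ_t restricted to E : t ∈ 2^ℕ} of Borel probability measures on E is not uniformly tight: for every compact set A ⊆ E there exists t with λ_t(A) = 0. -/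
/-! A compact set `A` avoiding `M` cannot project onto all of `2^ℕ`, since `M` meets every such
compact set. For `t` outside the projection of `A`, the measure `δ_t ⊗ λ` lives on `{t} × 2^ℕ`,
which misses `A`, so `A` is `δ_t ⊗ λ`-null. A single compact set therefore never carries mass
`1 - ε` for all `t` at once. -/

open MeasureTheory

theorem MeasureTheory.Measure.dirac_prod_apply_eq_zero {α β : Type*} [MeasurableSpace α]
    [MeasurableSingletonClass α] [MeasurableSpace β] (ν : Measure β) [SFinite ν] {t : α}
    {A : Set (α × β)} (ht : t ∉ Prod.fst '' A) : (Measure.dirac t).prod ν A = 0 := by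
  have hA : A ⊆ {t}ᶜ ×ˢ Set.univ := fun x hx =>
    ⟨fun hxt => ht ⟨x, hx, hxt⟩, trivial⟩
  refine measure_mono_null hA ?_
  rw [Measure.prod_prod, Measure.dirac_apply' _ (measurableSet_singleton t).compl]
  simp

theorem exists_notMem_image_fst_of_subset_compl {α β : Type*} [TopologicalSpace α]
    [TopologicalSpace β] {M A : Set (α × β)}
    (hM : ∀ C : Set (α × β), IsCompact C → Prod.fst '' C = Set.univ → (M ∩ C).Nonempty)
    (hA : IsCompact A) (hAM : A ⊆ Mᶜ) : ∃ t, t ∉ Prod.fst '' A := by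
  by_contra! hcover
  obtain ⟨x, hxM, hxA⟩ := hM A hA (Set.eq_univ_of_forall hcover)
  exact hAM hxA hxM

theorem stmt19_general (lam : Measure Cantor) [IsProbabilityMeasure lam]
    (M : Set (Cantor × Cantor))
    (hM : ∀ C : Set (Cantor × Cantor), IsCompact C →
      Prod.fst '' C = Set.univ → (M ∩ C).Nonempty)
    (lamt : Cantor → Measure (Cantor × Cantor))
    (hlamt : ∀ t : Cantor, lamt t = (Measure.dirac t).prod lam) :
    (∀ A : Set (Cantor × Cantor), IsCompact A → A ⊆ Mᶜ →
      ∃ t : Cantor, lamt t A = 0) ∧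
    ¬ (∀ ε : ℝ, 0 < ε → ∃ K : Set (Cantor × Cantor), IsCompact K ∧ K ⊆ Mᶜ ∧
        ∀ t : Cantor, 1 - ε ≤ (lamt t K).toReal) := by
  have hnull : ∀ A : Set (Cantor × Cantor), IsCompact A → A ⊆ Mᶜ →
      ∃ t : Cantor, lamt t A = 0 := by
    intro A hA hAM
    obtain ⟨t, ht⟩ := exists_notMem_image_fst_of_subset_compl hM hA hAM
    exact ⟨t, by rw [hlamt]; exact Measure.dirac_prod_apply_eq_zero lam ht⟩
  refine ⟨hnull, fun htight => ?_⟩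
  obtain ⟨K, hK, hKM, hKmass⟩ := htight (1 / 2) (by norm_num)
  obtain ⟨t, ht⟩ := hnull K hK hKM
  have := hKmass t
  rw [ht] at this
  norm_num at this

/-- If `M ⊆ 2^ℕ × 2^ℕ` meets every compact set projecting onto `2^ℕ` and is
null for every `λ_t = δ_t ⊗ λ`, then the family `{λ_t}` restricted to
`E = (2^ℕ × 2^ℕ) ∖ M` is not uniformly tight: every compact `A ⊆ E` has
`λ_t(A) = 0` for some `t`. -/
theorem stmt19 (lam : Measure Cantor) [IsProbabilityMeasure lam]
    (M : Set (Cantor × Cantor))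
    (hM : ∀ C : Set (Cantor × Cantor), IsCompact C →
      Prod.fst '' C = Set.univ → (M ∩ C).Nonempty)
    (lamt : Cantor → Measure (Cantor × Cantor))
    (hlamt : ∀ t : Cantor, lamt t = (Measure.dirac t).prod lam)
    (hMnull : ∀ t : Cantor, lamt t M = 0) :
    (∀ A : Set (Cantor × Cantor), IsCompact A → A ⊆ Mᶜ →
      ∃ t : Cantor, lamt t A = 0) ∧
    ¬ (∀ ε : ℝ, 0 < ε → ∃ K : Set (Cantor × Cantor), IsCompact K ∧ K ⊆ Mᶜ ∧
        ∀ t : Cantor, 1 - ε ≤ (lamt t K).toReal) :=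
  stmt19_general lam M hM lamt hlamt
end
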